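/- arXiv:2410.11136 — 7 statements merged into one kernel-verified Lean document; each statement's English description precedes it below -/
import Mathlib

section
/- Let H be a real Hilbert space and let P_1, …, P_n (n ≥ 1) be orthogonal projections on H satisfying ‖(1/n) Σ_{i=1}^n P_i‖ ≤ 1 − δ for some δ > 0. Let L ≥ n and let i_1, …, i_L ∈ {1, …, n} be a sequence in which every index j ∈ {1, …, n} appears; let k_j := min{ℓ : i_ℓ = j} be the position of the first appearance of j, and assume 1 = k_1 ≤ k_2 ≤ … ≤ k_n = L. Then ‖P_{i_L} P_{i_{L−1}} ⋯ P_{i_1}‖² ≤ 1 − n δ / (8 Σ_{j=1}^n k_j). -/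
open scoped RealInnerProductSpace

/-- A bounded operator on a real Hilbert space is an orthogonal projection if it is
self-adjoint and idempotent. -/
def IsOrthProj {H : Type*} [NormedAddCommGroup H] [InnerProductSpace ℝ H]
    (P : H →L[ℝ] H) : Prop :=
  (∀ x y : H, ⟪P x, y⟫ = ⟪x, P y⟫) ∧ ∀ x : H, P (P x) = P x

lemma isOrthProj_pythagoras {H : Type*} [NormedAddCommGroup H] [InnerProductSpace ℝ H]
    {P : H →L[ℝ] H} (hP : IsOrthProj P) (v : H) :
    ‖v‖ ^ 2 = ‖P v‖ ^ 2 + ‖v - P v‖ ^ 2 := by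
  have horth : ⟪P v, v - P v⟫ = 0 := by
    rw [hP.1]
    simp [hP.2 v]
  have := norm_add_sq_real (P v) (v - P v)
  rw [horth] at this
  simpa using this

lemma isOrthProj_norm_le {H : Type*} [NormedAddCommGroup H] [InnerProductSpace ℝ H]
    {P : H →L[ℝ] H} (hP : IsOrthProj P) (v : H) : ‖P v‖ ≤ ‖v‖ := by
  have h := isOrthProj_pythagoras hP v
  nlinarith [norm_nonneg (P v), norm_nonneg v, sq_nonneg ‖v - P v‖]

lemma isOrthProj_inner {H : Type*} [NormedAddCommGroup H] [InnerProductSpace ℝ H]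
    {P : H →L[ℝ] H} (hP : IsOrthProj P) (v : H) : ⟪v, P v⟫ = ‖P v‖ ^ 2 := by
  have : ⟪v, P v⟫ = ⟪P v, P v⟫ := by
    conv_lhs => rw [← hP.2 v]
    rw [← hP.1]
  rw [this, real_inner_self_eq_norm_sq]

set_option maxHeartbeats 1000000 in
/-- If `P_1, …, P_n` are orthogonal projections with `‖(1/n) ∑ P_i‖ ≤ 1 - δ`, and
`i_1, …, i_L` is a sequence of indices containing every `j ∈ [n]`, whose first-appearance
positions `k_j` (1-based) satisfy `1 = k_1 ≤ k_2 ≤ … ≤ k_n = L`, then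
`‖P_{i_L} ⋯ P_{i_1}‖² ≤ 1 - nδ / (8 ∑_j k_j)`.
Here `i ℓ` denotes `i_{ℓ+1}` and `k j` is the (0-based) position of the first appearance
of `j`, so that the 1-based position is `k j + 1`. The product `P_{i_L} ⋯ P_{i_1}`
(applying `P_{i_1}` first) is `((List.ofFn fun ℓ => P (i ℓ)).reverse).prod`. -/
theorem general_scan_gap_of_glauber_gap
    {H : Type*} [NormedAddCommGroup H] [InnerProductSpace ℝ H] [CompleteSpace H]
    (n L : ℕ) (hn : 1 ≤ n) (hL : n ≤ L)
    (P : Fin n → H →L[ℝ] H)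
    (hP : ∀ j, IsOrthProj (P j))
    (δ : ℝ) (hδ : 0 < δ)
    (hgap : ‖(n : ℝ)⁻¹ • ∑ j, P j‖ ≤ 1 - δ)
    (i : Fin L → Fin n) (k : Fin n → Fin L)
    (hfirst : ∀ j, i (k j) = j)
    (hmin : ∀ (j : Fin n) (ℓ : Fin L), i ℓ = j → k j ≤ ℓ)
    (hmono : Monotone k)
    (hk1 : (k ⟨0, by omega⟩ : ℕ) = 0)
    (hkn : (k ⟨n - 1, by omega⟩ : ℕ) = L - 1) :
    ‖((List.ofFn fun ℓ => P (i ℓ)).reverse).prod‖ ^ 2 ≤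
      1 - (n : ℝ) * δ / (8 * ∑ j, ((k j : ℕ) + 1 : ℝ)) := by
  classical
  have hn0 : (0:ℝ) < n := by exact_mod_cast hn
  set S : ℝ := ∑ j, ((k j : ℕ) + 1 : ℝ) with hS
  have hnS : (n:ℝ) ≤ S := by
    rw [hS]
    calc (n:ℝ) = ∑ _j : Fin n, (1:ℝ) := by simp
      _ ≤ _ := Finset.sum_le_sum (fun j _ => by
        have := Nat.cast_nonneg (α := ℝ) (k j : ℕ); linarith)
  have hSpos : 0 < S := lt_of_lt_of_le hn0 hnS
  set c : ℝ := (n : ℝ) * δ / (8 * S) with hc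
  have hδ1 : δ ≤ 1 := by
    have := norm_nonneg ((n : ℝ)⁻¹ • ∑ j, P j)
    linarith
  have hcle : c ≤ 1 := by
    rw [hc, div_le_one (by positivity)]
    nlinarith
  set T := ((List.ofFn fun ℓ => P (i ℓ)).reverse).prod with hT
  have hkey : ∀ x : H, ‖T x‖ ^ 2 ≤ (1 - c) * ‖x‖ ^ 2 := by
    intro x
    set y : ℕ → H := fun m => (((List.ofFn fun ℓ => P (i ℓ)).take m).reverse).prod x with hy
    have hy0 : y 0 = x := by simp [hy]
    have hyL : y L = T x := by
      have ht : (List.ofFn fun ℓ => P (i ℓ)).take L = List.ofFn fun ℓ => P (i ℓ) := by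
        apply List.take_of_length_le; simp
      simp only [hy, ht, hT]
    have hstep : ∀ m (h : m < L), y (m+1) = P (i ⟨m, h⟩) (y m) := by
      intro m h
      have hlen : m < (List.ofFn fun ℓ => P (i ℓ)).length := by simpa using h
      simp only [hy]
      rw [List.take_succ]
      have hget : (List.ofFn fun ℓ => P (i ℓ))[m]? = some (P (i ⟨m, h⟩)) := by
        rw [List.getElem?_eq_getElem hlen]
        simp [List.getElem_ofFn]
      rw [hget]
      simp [List.reverse_append, ContinuousLinearMap.mul_apply]
    set d : ℕ → ℝ := fun m => ‖y (m+1) - y m‖ with hd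
    have hdnn : ∀ m, 0 ≤ d m := fun m => norm_nonneg _
    have hstep2 : ∀ m, m < L → ‖y m‖ ^ 2 = ‖y (m+1)‖ ^ 2 + d m ^ 2 := by
      intro m h
      have hpy := isOrthProj_pythagoras (hP (i ⟨m, h⟩)) (y m)
      rw [← hstep m h] at hpy
      have hdm : d m = ‖y m - y (m+1)‖ := by rw [hd]; exact norm_sub_rev _ _
      rw [hdm]
      exact hpy
    set ε2 : ℝ := ∑ ℓ ∈ Finset.range L, d ℓ ^ 2 with hε2
    have hε2nn : 0 ≤ ε2 := Finset.sum_nonneg fun _ _ => sq_nonneg _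
    have htel : ∀ m, m ≤ L → ‖y m‖ ^ 2 = ‖x‖ ^ 2 - ∑ ℓ ∈ Finset.range m, d ℓ ^ 2 := by
      intro m
      induction m with
      | zero => intro _; simp [hy0]
      | succ m ih =>
        intro h
        have hm : m < L := by omega
        rw [Finset.sum_range_succ]
        have h2 := hstep2 m hm
        have h3 := ih (le_of_lt hm)
        linarith
    have hdist : ∀ m, m ≤ L → ‖x - y m‖ ≤ ∑ ℓ ∈ Finset.range m, d ℓ := by
      intro m
      induction m with
      | zero => intro _; simp [hy0]
      | succ m ih =>
        intro h
        have hm : m < L := by omega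
        rw [Finset.sum_range_succ]
        have h1 : ‖x - y (m+1)‖ ≤ ‖x - y m‖ + ‖y m - y (m+1)‖ := by
          calc ‖x - y (m+1)‖ = ‖(x - y m) + (y m - y (m+1))‖ := by abel_nf
            _ ≤ _ := norm_add_le _ _
        have h2 : ‖y m - y (m+1)‖ = d m := norm_sub_rev _ _
        have h3 := ih (le_of_lt hm)
        linarith
    have hdist2 : ∀ m, m ≤ L → ‖x - y m‖ ^ 2 ≤ m * ε2 := by
      intro m hm
      have h1 := hdist m hm
      have h2 : (∑ ℓ ∈ Finset.range m, d ℓ) ^ 2 ≤ m * ∑ ℓ ∈ Finset.range m, d ℓ ^ 2 := by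
        simpa using sq_sum_le_card_mul_sum_sq (s := Finset.range m) (f := d)
      have h3 : ∑ ℓ ∈ Finset.range m, d ℓ ^ 2 ≤ ε2 :=
        Finset.sum_le_sum_of_subset_of_nonneg (Finset.range_subset_range.2 hm)
          (fun _ _ _ => sq_nonneg _)
      have h4 : ‖x - y m‖ ^ 2 ≤ (∑ ℓ ∈ Finset.range m, d ℓ) ^ 2 :=
        pow_le_pow_left₀ (norm_nonneg _) h1 2
      have h5 : (m:ℝ) * (∑ ℓ ∈ Finset.range m, d ℓ ^ 2) ≤ m * ε2 :=
        mul_le_mul_of_nonneg_left h3 (by positivity)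
      linarith
    have h5 : ∀ j, ‖x - P j x‖ ^ 2 ≤ 8 * ((k j : ℕ):ℝ) * ε2 + 2 * d (k j) ^ 2 := by
      intro j
      set m : ℕ := (k j : ℕ) with hm
      have hmL : m < L := (k j).2
      have hPj : P j (y m) = y (m+1) := by
        rw [hstep m hmL]
        have hkj : (⟨m, hmL⟩ : Fin L) = k j := Fin.ext rfl
        rw [hkj, hfirst]
      have ha : ‖x - y m‖ ^ 2 ≤ m * ε2 := hdist2 m (le_of_lt hmL)
      have htri : ‖x - P j x‖ ≤ 2 * ‖x - y m‖ + d m := by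
        have e : x - P j x = (x - y m) + (y m - y (m+1)) + (P j (y m) - P j x) := by
          rw [hPj]; abel
        have h1 : ‖x - P j x‖ ≤ ‖x - y m‖ + ‖y m - y (m+1)‖ + ‖P j (y m) - P j x‖ := by
          rw [e]
          exact norm_add₃_le
        have h2 : ‖y m - y (m+1)‖ = d m := norm_sub_rev _ _
        have h3 : ‖P j (y m) - P j x‖ ≤ ‖x - y m‖ := by
          calc ‖P j (y m) - P j x‖ = ‖P j (y m - x)‖ := by rw [map_sub]
            _ ≤ ‖y m - x‖ := isOrthProj_norm_le (hP j) _
            _ = ‖x - y m‖ := norm_sub_rev _ _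
        linarith
      nlinarith [norm_nonneg (x - P j x), norm_nonneg (x - y m), hdnn m,
        sq_nonneg (2 * ‖x - y m‖ - d m)]
    have h6 : (n:ℝ) * δ * ‖x‖ ^ 2 ≤ ∑ j, ‖x - P j x‖ ^ 2 := by
      have hA : ⟪x, ((n : ℝ)⁻¹ • ∑ j, P j) x⟫ ≤ (1 - δ) * ‖x‖ ^ 2 := by
        calc ⟪x, ((n : ℝ)⁻¹ • ∑ j, P j) x⟫
            ≤ ‖x‖ * ‖((n : ℝ)⁻¹ • ∑ j, P j) x‖ := real_inner_le_norm _ _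
          _ ≤ ‖x‖ * (‖(n : ℝ)⁻¹ • ∑ j, P j‖ * ‖x‖) :=
              mul_le_mul_of_nonneg_left (ContinuousLinearMap.le_opNorm _ _) (norm_nonneg _)
          _ ≤ (1 - δ) * ‖x‖ ^ 2 := by
              nlinarith [norm_nonneg x, norm_nonneg ((n : ℝ)⁻¹ • ∑ j, P j)]
      have hB : ⟪x, ((n : ℝ)⁻¹ • ∑ j, P j) x⟫
          = (n:ℝ)⁻¹ * ∑ j, (‖x‖ ^ 2 - ‖x - P j x‖ ^ 2) := by
        rw [ContinuousLinearMap.smul_apply, ContinuousLinearMap.sum_apply,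
          real_inner_smul_right, inner_sum]
        congr 1
        apply Finset.sum_congr rfl
        intro j _
        rw [isOrthProj_inner (hP j)]
        have := isOrthProj_pythagoras (hP j) x
        linarith
      rw [hB, Finset.sum_sub_distrib, Finset.sum_const, Finset.card_univ,
        Fintype.card_fin, nsmul_eq_mul] at hA
      have h9 : (n:ℝ) * ((n:ℝ)⁻¹ * ((n:ℝ) * ‖x‖ ^ 2 - ∑ j, ‖x - P j x‖ ^ 2))
          ≤ (n:ℝ) * ((1 - δ) * ‖x‖ ^ 2) := mul_le_mul_of_nonneg_left hA (le_of_lt hn0)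
      rw [← mul_assoc, mul_inv_cancel₀ (ne_of_gt hn0), one_mul] at h9
      nlinarith
    have h7 : ∑ j, d (k j) ^ 2 ≤ ε2 := by
      have hinj : Function.Injective k := by
        intro a b hab
        calc a = i (k a) := (hfirst a).symm
          _ = i (k b) := by rw [hab]
          _ = b := hfirst b
      have he : ∑ m ∈ Finset.univ.image k, d (m:ℕ) ^ 2 = ∑ j, d ((k j : ℕ)) ^ 2 :=
        Finset.sum_image (f := fun m : Fin L => d (m:ℕ) ^ 2) (g := k) (s := Finset.univ)
          (fun a _ b _ h => hinj h)
      rw [← he]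
      calc ∑ m ∈ Finset.univ.image k, d (m:ℕ) ^ 2
          ≤ ∑ m : Fin L, d (m:ℕ) ^ 2 :=
            Finset.sum_le_sum_of_subset_of_nonneg (Finset.subset_univ _)
              (fun _ _ _ => sq_nonneg _)
        _ = ε2 := by
            rw [hε2]
            exact Fin.sum_univ_eq_sum_range (fun m => d m ^ 2) L
    have hsum : (n:ℝ) * δ * ‖x‖ ^ 2 ≤ 8 * S * ε2 := by
      have h8 : ∑ j, ‖x - P j x‖ ^ 2
          ≤ ∑ j, (8 * ((k j : ℕ):ℝ) * ε2 + 2 * d (k j) ^ 2) :=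
        Finset.sum_le_sum fun j _ => h5 j
      rw [Finset.sum_add_distrib] at h8
      have e1 : ∑ j, 8 * ((k j : ℕ):ℝ) * ε2 = 8 * (∑ j, ((k j : ℕ):ℝ)) * ε2 := by
        rw [← Finset.sum_mul, ← Finset.mul_sum]
      have e2 : ∑ j, 2 * d (k j) ^ 2 = 2 * ∑ j, d (k j) ^ 2 := by
        rw [Finset.mul_sum]
      have e3 : S = (∑ j, ((k j : ℕ):ℝ)) + n := by
        rw [hS, Finset.sum_add_distrib]
        simp
      have hknn : 0 ≤ ∑ j, ((k j : ℕ):ℝ) := Finset.sum_nonneg fun _ _ => by positivity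
      rw [e1, e2] at h8
      have hn1 : (1:ℝ) ≤ n := by exact_mod_cast hn
      nlinarith [h6, h7]
    have hεc : c * ‖x‖ ^ 2 ≤ ε2 := by
      rw [hc, div_mul_eq_mul_div, div_le_iff₀ (by positivity)]
      nlinarith
    have hTx : ‖T x‖ ^ 2 = ‖x‖ ^ 2 - ε2 := by
      rw [← hyL, htel L le_rfl]
    nlinarith
  have h1c : 0 ≤ 1 - c := by
    have hc0 : 0 ≤ c := by positivity
    linarith
  have hTle : ‖T‖ ≤ Real.sqrt (1 - c) := by
    apply ContinuousLinearMap.opNorm_le_bound _ (Real.sqrt_nonneg _)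
    intro x
    have hk2 : ‖T x‖ ^ 2 ≤ (Real.sqrt (1 - c) * ‖x‖) ^ 2 := by
      rw [mul_pow, Real.sq_sqrt h1c]
      exact hkey x
    calc ‖T x‖ = Real.sqrt (‖T x‖ ^ 2) := (Real.sqrt_sq (norm_nonneg _)).symm
      _ ≤ Real.sqrt ((Real.sqrt (1 - c) * ‖x‖) ^ 2) := Real.sqrt_le_sqrt hk2
      _ = Real.sqrt (1 - c) * ‖x‖ := Real.sqrt_sq (by positivity)
  calc ‖T‖ ^ 2 ≤ Real.sqrt (1 - c) ^ 2 := pow_le_pow_left₀ (norm_nonneg _) hTle 2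
    _ = 1 - c := Real.sq_sqrt h1c
end

section
/- Let H be a real Hilbert space and let P_1, …, P_n (n ≥ 1) be orthogonal projections on H satisfying ‖(1/n) Σ_{i=1}^n P_i‖ ≤ 1 − δ for some δ > 0. Then the full product in index order satisfies ‖P_n P_{n−1} ⋯ P_1‖ ≤ 1 − δ / (8(n+1)). -/
/-!
Follow the orbit `x, P₁ x, P₂ P₁ x, …, Q x` of `Q = Pₙ ⋯ P₁`. Its steps are orthogonal, so their
squared lengths add up to `‖x‖² - ‖Q x‖²`, and by Cauchy–Schwarz every point `x_k` of the orbit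
satisfies `‖x - x_k‖² ≤ n (‖x‖² - ‖Q x‖²)`. As `P_j x` is the point of `ran P_j` nearest to `x` and
`x_j = P_j x_{j-1}` lies in `ran P_j`, also `‖x - P_j x‖² ≤ n (‖x‖² - ‖Q x‖²)`. The gap says
`∑_j ‖x - P_j x‖² = n ‖x‖² - ⟪∑_j P_j x, x⟫ ≥ n δ ‖x‖²`, hence `‖Q x‖² ≤ (1 - δ/n) ‖x‖²`.
-/

open scoped RealInnerProductSpace

namespace IsOrthProj

variable {H : Type*} [NormedAddCommGroup H] [InnerProductSpace ℝ H] {P : H →L[ℝ] H}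

theorem inner_sub_apply_apply_eq_zero (hP : IsOrthProj P) (x y : H) :
    ⟪x - P x, P y⟫ = 0 := by
  rw [inner_sub_left, hP.1 x (P y), hP.2, sub_self]

theorem inner_apply_self (hP : IsOrthProj P) (x : H) : ⟪P x, x⟫ = ‖P x‖ ^ 2 :=
  calc ⟪P x, x⟫ = ⟪P (P x), x⟫ := by rw [hP.2]
    _ = ‖P x‖ ^ 2 := by rw [hP.1, real_inner_self_eq_norm_sq]

theorem norm_sq_eq_add (hP : IsOrthProj P) (x : H) :
    ‖x‖ ^ 2 = ‖P x‖ ^ 2 + ‖x - P x‖ ^ 2 := by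
  have h := norm_add_sq_eq_norm_sq_add_norm_sq_real
    (real_inner_comm (x - P x) (P x) ▸ hP.inner_sub_apply_apply_eq_zero x x)
  rw [add_sub_cancel] at h
  nlinarith [h]

theorem norm_apply_le (hP : IsOrthProj P) (x : H) : ‖P x‖ ≤ ‖x‖ := by
  rw [← sq_le_sq₀ (norm_nonneg _) (norm_nonneg _), hP.norm_sq_eq_add x]
  exact le_add_of_nonneg_right (sq_nonneg _)

theorem norm_sub_apply_sq (hP : IsOrthProj P) (x : H) :
    ‖x - P x‖ ^ 2 = ‖x‖ ^ 2 - ⟪P x, x⟫ := by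
  rw [hP.inner_apply_self, hP.norm_sq_eq_add x, add_sub_cancel_left]

theorem norm_sub_apply_le (hP : IsOrthProj P) (x y : H) : ‖x - P x‖ ≤ ‖x - P y‖ := by
  have h := norm_add_sq_eq_norm_sq_add_norm_sq_real
    (hP.inner_sub_apply_apply_eq_zero x (x - y))
  rw [map_sub, sub_add_sub_cancel] at h
  nlinarith [norm_nonneg (x - P x), norm_nonneg (x - P y), mul_self_nonneg ‖P x - P y‖]

end IsOrthProj

theorem add_sq_le_succ_mul_add_sq {a b e m : ℝ} (he : 0 ≤ e) (hm : 0 ≤ m) (h : a ^ 2 ≤ m * e) :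
    (a + b) ^ 2 ≤ (m + 1) * (e + b ^ 2) := by
  rcases hm.eq_or_lt with rfl | hm
  · nlinarith
  · nlinarith [sq_nonneg (a - m * b), mul_pos hm hm]

section ProjectionProducts

variable {H : Type*} [NormedAddCommGroup H] [InnerProductSpace ℝ H] {L : List (H →L[ℝ] H)}

theorem norm_list_prod_apply_le (hL : ∀ P ∈ L, IsOrthProj P) (x : H) :
    ‖L.prod x‖ ≤ ‖x‖ := by
  induction L with
  | nil => simp
  | cons P L ih =>
    rw [List.forall_mem_cons] at hL
    calc ‖(P :: L).prod x‖ = ‖P (L.prod x)‖ := by simp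
      _ ≤ ‖L.prod x‖ := hL.1.norm_apply_le _
      _ ≤ ‖x‖ := ih hL.2

theorem norm_sub_list_prod_apply_sq_le (hL : ∀ P ∈ L, IsOrthProj P) (x : H) :
    ‖x - L.prod x‖ ^ 2 ≤ L.length * (‖x‖ ^ 2 - ‖L.prod x‖ ^ 2) := by
  induction L with
  | nil => simp
  | cons P L ih =>
    rw [List.forall_mem_cons] at hL
    set y := L.prod x
    have hdist : ‖x - P y‖ ≤ ‖x - y‖ + ‖y - P y‖ := norm_sub_le_norm_sub_add_norm_sub _ _ _
    have hy : ‖y‖ ≤ ‖x‖ := norm_list_prod_apply_le hL.2 x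
    have hPy := hL.1.norm_sq_eq_add y
    have hxy : 0 ≤ ‖x‖ ^ 2 - ‖y‖ ^ 2 := by nlinarith [norm_nonneg y]
    have step := add_sq_le_succ_mul_add_sq (b := ‖y - P y‖) hxy (Nat.cast_nonneg _) (ih hL.2)
    calc ‖x - (P :: L).prod x‖ ^ 2 = ‖x - P y‖ ^ 2 := by simp [y]
      _ ≤ (‖x - y‖ + ‖y - P y‖) ^ 2 := by gcongr
      _ ≤ _ := step
      _ = _ := by simp only [List.length_cons, Nat.cast_succ, List.prod_cons,
          mul_apply_eq_comp]; rw [hPy]; ring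

theorem norm_sub_apply_sq_le_of_mem (hL : ∀ P ∈ L, IsOrthProj P) {P : H →L[ℝ] H} (hP : P ∈ L)
    (x : H) : ‖x - P x‖ ^ 2 ≤ L.length * (‖x‖ ^ 2 - ‖L.prod x‖ ^ 2) := by
  obtain ⟨L₁, L₂, rfl⟩ := List.append_of_mem hP
  have hL₁ : ∀ Q ∈ L₁, IsOrthProj Q := fun Q hQ => hL Q (by simp [hQ])
  have hL₂ : ∀ Q ∈ P :: L₂, IsOrthProj Q := fun Q hQ => hL Q (by simp_all)
  set y := (P :: L₂).prod x
  have hy : ‖y‖ ≤ ‖x‖ := norm_list_prod_apply_le hL₂ x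
  calc ‖x - P x‖ ^ 2 ≤ ‖x - y‖ ^ 2 := by
        gcongr
        exact (hL P hP).norm_sub_apply_le x (L₂.prod x)
    _ ≤ (P :: L₂).length * (‖x‖ ^ 2 - ‖y‖ ^ 2) := norm_sub_list_prod_apply_sq_le hL₂ x
    _ ≤ (L₁ ++ P :: L₂).length * (‖x‖ ^ 2 - ‖(L₁ ++ P :: L₂).prod x‖ ^ 2) := by
        rw [List.prod_append, mul_apply_eq_comp]
        gcongr
        · nlinarith [norm_nonneg y]
        · simp
        · exact norm_list_prod_apply_le hL₁ y

end ProjectionProducts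

theorem IsOrthProj.card_mul_le_sum_norm_sub_apply_sq {H : Type*} [NormedAddCommGroup H]
    [InnerProductSpace ℝ H] {ι : Type*} [Fintype ι] {P : ι → H →L[ℝ] H}
    (hP : ∀ i, IsOrthProj (P i)) {δ : ℝ} (hgap : ‖(Fintype.card ι : ℝ)⁻¹ • ∑ i, P i‖ ≤ 1 - δ)
    (x : H) : Fintype.card ι * δ * ‖x‖ ^ 2 ≤ ∑ i, ‖x - P i x‖ ^ 2 := by
  set N : ℝ := (Fintype.card ι : ℝ)
  have hsum : ∑ i, ‖x - P i x‖ ^ 2 = N * ‖x‖ ^ 2 - ⟪(∑ i, P i) x, x⟫ := by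
    simp_rw [fun i => (hP i).norm_sub_apply_sq x, Finset.sum_sub_distrib,
      sum_apply, sum_inner, Finset.sum_const, Finset.card_univ, nsmul_eq_mul, N]
  have havg : ⟪(N⁻¹ • ∑ i, P i) x, x⟫ ≤ (1 - δ) * ‖x‖ ^ 2 := by
    calc ⟪(N⁻¹ • ∑ i, P i) x, x⟫ ≤ ‖(N⁻¹ • ∑ i, P i) x‖ * ‖x‖ := real_inner_le_norm _ _
      _ ≤ ‖N⁻¹ • ∑ i, P i‖ * ‖x‖ * ‖x‖ := by gcongr; exact ContinuousLinearMap.le_opNorm _ _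
      _ ≤ (1 - δ) * ‖x‖ ^ 2 := by rw [mul_assoc, ← sq]; gcongr
  rcases (Fintype.card ι).eq_zero_or_pos with hι | hι
  · simp only [N, hι, CharP.cast_eq_zero, zero_mul]
    positivity
  · have hN : N ≠ 0 := by positivity
    rw [smul_apply, real_inner_smul_left] at havg
    rw [hsum]
    have := mul_le_mul_of_nonneg_left havg (by positivity : 0 ≤ N)
    rw [← mul_assoc, mul_inv_cancel₀ hN, one_mul] at this
    linarith

theorem sub_le_mul_one_sub_div_sq {n δ : ℝ} (hn : 0 ≤ n) (hδ : 0 ≤ δ) :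
    n - δ ≤ n * (1 - δ / (8 * (n + 1))) ^ 2 := by
  set c := δ / (8 * (n + 1)) with hc
  have hδc : δ = 8 * (n + 1) * c := by rw [hc]; field_simp
  have hc0 : 0 ≤ c := by positivity
  nlinarith [mul_nonneg hn hc0, mul_nonneg (mul_nonneg hn hc0) hc0]

theorem scan_gap_of_glauber_gap_general
    {H : Type*} [NormedAddCommGroup H] [InnerProductSpace ℝ H]
    (n : ℕ) (hn : 1 ≤ n) (P : Fin n → H →L[ℝ] H)
    (hP : ∀ j, IsOrthProj (P j))
    (δ : ℝ) (hδ : 0 < δ)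
    (hgap : ‖(n : ℝ)⁻¹ • ∑ j, P j‖ ≤ 1 - δ) :
    ‖((List.ofFn P).reverse).prod‖ ≤ 1 - δ / (8 * (n + 1)) := by
  set L := (List.ofFn P).reverse
  have hL : ∀ R ∈ L, IsOrthProj R := by simpa [L] using hP
  have hn0 : (0 : ℝ) < n := by exact_mod_cast hn
  have hδ1 : δ ≤ 1 := by linarith [norm_nonneg ((n : ℝ)⁻¹ • ∑ j, P j)]
  have hbound : 0 ≤ 1 - δ / (8 * (n + 1)) := by
    rw [sub_nonneg, div_le_one (by positivity)]
    linarith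
  refine ContinuousLinearMap.opNorm_le_bound _ hbound fun x => ?_
  have hloss : n * (δ * ‖x‖ ^ 2) ≤ n * (n * (‖x‖ ^ 2 - ‖L.prod x‖ ^ 2)) :=
    calc n * (δ * ‖x‖ ^ 2) ≤ ∑ j, ‖x - P j x‖ ^ 2 := by
          simpa [mul_assoc] using
            IsOrthProj.card_mul_le_sum_norm_sub_apply_sq hP (by simpa using hgap) x
      _ ≤ ∑ _j : Fin n, n * (‖x‖ ^ 2 - ‖L.prod x‖ ^ 2) := by
          gcongr with j
          simpa [L] using norm_sub_apply_sq_le_of_mem hL (P := P j) (by simp [L]) x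
      _ = _ := by simp
  have hsq : n * ‖L.prod x‖ ^ 2 ≤ n * ((1 - δ / (8 * (n + 1))) * ‖x‖) ^ 2 := by
    have hloss' := le_of_mul_le_mul_left hloss hn0
    calc n * ‖L.prod x‖ ^ 2 ≤ (n - δ) * ‖x‖ ^ 2 := by linarith
      _ ≤ n * (1 - δ / (8 * (n + 1))) ^ 2 * ‖x‖ ^ 2 := by
          gcongr
          exact sub_le_mul_one_sub_div_sq hn0.le hδ.le
      _ = _ := by ring
  rw [← sq_le_sq₀ (norm_nonneg _) (mul_nonneg hbound (norm_nonneg x))]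
  exact le_of_mul_le_mul_left hsq hn0

/-- If `P_1, …, P_n` are orthogonal projections with `‖(1/n) ∑ P_i‖ ≤ 1 - δ`, then
`‖P_n ⋯ P_1‖ ≤ 1 - δ/(8(n+1))`. -/
theorem scan_gap_of_glauber_gap
    {H : Type*} [NormedAddCommGroup H] [InnerProductSpace ℝ H] [CompleteSpace H]
    (n : ℕ) (hn : 1 ≤ n) (P : Fin n → H →L[ℝ] H)
    (hP : ∀ j, IsOrthProj (P j))
    (δ : ℝ) (hδ : 0 < δ)
    (hgap : ‖(n : ℝ)⁻¹ • ∑ j, P j‖ ≤ 1 - δ) :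
    ‖((List.ofFn P).reverse).prod‖ ≤ 1 - δ / (8 * (n + 1)) :=
  scan_gap_of_glauber_gap_general n hn P hP δ hδ hgap
end

section
/- Let H be a real Hilbert space and let P_1, …, P_n (n ≥ 1) be orthogonal projections on H satisfying ‖(1/n) Σ_{i=1}^n P_i‖ ≤ 1 − δ for some δ with 0 < δ ≤ 1. Let i_1, …, i_L ∈ {1, …, n} be a sequence in which every index of {1, …, n} appears, let k_1 < k_2 < … < k_n denote the successive positions at which a not-previously-seen index appears (so k_1 = 1 and k_n is the first time all n indices have been seen), and assume k_n = L. If Σ_{j=1}^n k_j ≤ 2 n², then ‖P_{i_L} P_{i_{L−1}} ⋯ P_{i_1}‖ ≤ 1 − δ / (32 n). -/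
open scoped RealInnerProductSpace

section Aux

variable {H : Type*} [NormedAddCommGroup H] [InnerProductSpace ℝ H]

lemma inner_proj_self {P : H →L[ℝ] H} (hP : IsOrthProj P) (v : H) :
    ⟪P v, v⟫ = ‖P v‖ ^ 2 := by
  have h1 : ⟪P v, P v⟫ = ⟪v, P v⟫ := by rw [hP.1 v (P v), hP.2]
  rw [← real_inner_self_eq_norm_sq, h1, real_inner_comm]

lemma proj_pythagoras {P : H →L[ℝ] H} (hP : IsOrthProj P) (v : H) :
    ‖P v‖ ^ 2 + ‖v - P v‖ ^ 2 = ‖v‖ ^ 2 := by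
  have horth : ⟪P v, v - P v⟫ = 0 := by
    rw [inner_sub_right]
    have h1 : ⟪P v, P v⟫ = ⟪v, P v⟫ := by rw [hP.1 v (P v), hP.2]
    rw [h1, real_inner_comm v (P v)]
    ring
  have := norm_add_sq_eq_norm_sq_add_norm_sq_real horth
  rw [add_sub_cancel] at this
  nlinarith [this]

lemma proj_norm_le {P : H →L[ℝ] H} (hP : IsOrthProj P) (v : H) :
    ‖P v‖ ≤ ‖v‖ := by
  have := proj_pythagoras hP v
  nlinarith [norm_nonneg (P v), norm_nonneg v, sq_nonneg ‖v - P v‖]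

lemma reverse_prod_ofFn_succ' {k : ℕ} (g : Fin (k + 1) → H →L[ℝ] H) (x : H) :
    ((List.ofFn g).reverse).prod x
      = g (Fin.last k) (((List.ofFn (g ∘ Fin.castSucc)).reverse).prod x) := by
  rw [List.ofFn_succ', List.concat_eq_append, List.reverse_append,
    List.reverse_singleton, List.singleton_append, List.prod_cons]
  rfl

end Aux

set_option maxHeartbeats 1000000 in
/-- If `P_1, …, P_n` are orthogonal projections with `‖(1/n) ∑ P_i‖ ≤ 1 - δ`
(`0 < δ ≤ 1`), and `i_1, …, i_L` is a sequence of indices in which every index of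
`[n]` appears, such that the first-appearance (1-based) positions `k_1 < … < k_n` satisfy
`k_n = L` and `∑_j k_j ≤ 2 n²`, then `‖P_{i_L} ⋯ P_{i_1}‖ ≤ 1 - δ/(32 n)`.
Here `m j` is the (0-based) position of the first appearance of index `j`, so the
multiset `{k_1, …, k_n}` of 1-based first-appearance positions is `{m j + 1 : j}`, and
the hypotheses `k_n = L` and `∑_j k_j ≤ 2 n²` become `∃ j, m j + 1 = L` and
`∑_j (m j + 1) ≤ 2 n²`. -/
theorem pseudorandom_scan_gap_of_glauber_gap
    {H : Type*} [NormedAddCommGroup H] [InnerProductSpace ℝ H] [CompleteSpace H]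
    (n L : ℕ) (hn : 1 ≤ n)
    (P : Fin n → H →L[ℝ] H)
    (hP : ∀ j, IsOrthProj (P j))
    (δ : ℝ) (hδ0 : 0 < δ) (hδ1 : δ ≤ 1)
    (hgap : ‖(n : ℝ)⁻¹ • ∑ j, P j‖ ≤ 1 - δ)
    (i : Fin L → Fin n) (m : Fin n → Fin L)
    (hfirst : ∀ j, i (m j) = j)
    (hmin : ∀ (j : Fin n) (ℓ : Fin L), i ℓ = j → m j ≤ ℓ)
    (hlast : ∃ j, (m j : ℕ) + 1 = L)
    (hsum : ∑ j, ((m j : ℕ) + 1) ≤ 2 * n ^ 2) :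
    ‖((List.ofFn fun ℓ => P (i ℓ)).reverse).prod‖ ≤ 1 - δ / (32 * n) := by
  have npos : (0 : ℝ) < n := by exact_mod_cast hn
  set ν : ℝ := δ / (32 * n) with hν
  have hνpos : 0 < ν := by positivity
  have hn1 : (1 : ℝ) ≤ n := by exact_mod_cast hn
  have hνle : ν ≤ 1 / 32 := by
    rw [hν, div_le_div_iff₀ (by positivity) (by norm_num)]
    nlinarith
  have hbound : (0 : ℝ) ≤ 1 - ν := by linarith
  refine ContinuousLinearMap.opNorm_le_bound _ hbound fun x => ?_
  -- the partial products
  set y : ℕ → H := fun k =>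
    Nat.rec x (fun ℓ v => if h : ℓ < L then P (i ⟨ℓ, h⟩) v else v) k with hy
  have hy0 : y 0 = x := rfl
  have hystep : ∀ k, y (k + 1) = if h : k < L then P (i ⟨k, h⟩) (y k) else y k :=
    fun k => rfl
  have hmono : ∀ a b : ℕ, a ≤ b → ‖y b‖ ≤ ‖y a‖ := by
    have : ∀ k, ‖y (k + 1)‖ ≤ ‖y k‖ := by
      intro k
      rw [hystep]
      split
      · exact proj_norm_le (hP _) _
      · exact le_refl _
    have ha : Antitone fun k => ‖y k‖ := antitone_nat_of_succ_le this
    exact fun a b hab => ha hab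
  have hpyth : ∀ k, ‖y k‖ ^ 2 + ∑ ℓ ∈ Finset.range k, ‖y (ℓ + 1) - y ℓ‖ ^ 2 = ‖x‖ ^ 2 := by
    intro k
    induction k with
    | zero => simp [hy0]
    | succ k ih =>
      rw [Finset.sum_range_succ]
      rw [hystep k]
      split
      · next h =>
        have hp := proj_pythagoras (hP (i ⟨k, h⟩)) (y k)
        have : ‖y k - P (i ⟨k, h⟩) (y k)‖ = ‖P (i ⟨k, h⟩) (y k) - y k‖ := norm_sub_rev _ _
        rw [this] at hp
        linarith
      · simpa using ih
  set η : ℝ := ‖x‖ ^ 2 - ‖y L‖ ^ 2 with hη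
  have hη0 : 0 ≤ η := by
    have := hmono 0 L (Nat.zero_le L)
    rw [hy0] at this
    nlinarith [norm_nonneg (y L), norm_nonneg x]
  have hsumsq : ∀ k, k ≤ L → ∑ ℓ ∈ Finset.range k, ‖y (ℓ + 1) - y ℓ‖ ^ 2 ≤ η := by
    intro k hk
    have h1 := hpyth k
    have h2 := hmono k L hk
    have h3 : ‖y L‖ ^ 2 ≤ ‖y k‖ ^ 2 := by
      nlinarith [norm_nonneg (y L), norm_nonneg (y k)]
    rw [hη]
    linarith
  have htele : ∀ k, ‖y k - x‖ ≤ ∑ ℓ ∈ Finset.range k, ‖y (ℓ + 1) - y ℓ‖ := by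
    intro k
    induction k with
    | zero => simp [hy0]
    | succ k ih =>
      rw [Finset.sum_range_succ]
      calc ‖y (k + 1) - x‖ ≤ ‖y (k + 1) - y k‖ + ‖y k - x‖ := norm_sub_le_norm_sub_add_norm_sub _ _ _
        _ ≤ _ := by linarith
  have hdist : ∀ k, k ≤ L → ‖y k - x‖ ^ 2 ≤ k * η := by
    intro k hk
    have h1 : ‖y k - x‖ ^ 2 ≤ (∑ ℓ ∈ Finset.range k, ‖y (ℓ + 1) - y ℓ‖) ^ 2 :=
      pow_le_pow_left₀ (norm_nonneg _) (htele k) 2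
    have h2 : (∑ ℓ ∈ Finset.range k, ‖y (ℓ + 1) - y ℓ‖) ^ 2
        ≤ (Finset.range k).card * ∑ ℓ ∈ Finset.range k, ‖y (ℓ + 1) - y ℓ‖ ^ 2 :=
      sq_sum_le_card_mul_sum_sq
    rw [Finset.card_range] at h2
    have h3 := hsumsq k hk
    calc ‖y k - x‖ ^ 2 ≤ (k : ℝ) * ∑ ℓ ∈ Finset.range k, ‖y (ℓ + 1) - y ℓ‖ ^ 2 := le_trans h1 h2
      _ ≤ (k : ℝ) * η := by
        apply mul_le_mul_of_nonneg_left h3 (by positivity)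
  -- per-index estimate
  have hproj : ∀ j : Fin n, ‖x - P j x‖ ^ 2 ≤ 4 * ((m j : ℕ) + 1) * η := by
    intro j
    set k : ℕ := (m j : ℕ) with hk
    have hkL : k < L := (m j).isLt
    have hyk1 : y (k + 1) = P j (y k) := by
      rw [hystep k, dif_pos hkL]
      congr 1
      rw [show (⟨k, hkL⟩ : Fin L) = m j from Fin.ext rfl, hfirst j]
    have htri : ‖x - P j x‖ ≤ ‖x - y (k + 1)‖ + ‖y (k + 1) - P j x‖ :=
      norm_sub_le_norm_sub_add_norm_sub _ _ _
    have h2 : ‖y (k + 1) - P j x‖ ≤ ‖y k - x‖ := by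
      rw [hyk1, ← map_sub]
      exact proj_norm_le (hP j) _
    have h3 : ‖x - y (k + 1)‖ ^ 2 ≤ (k + 1) * η := by
      rw [norm_sub_rev]
      exact_mod_cast hdist (k + 1) hkL
    have h4 : ‖y k - x‖ ^ 2 ≤ (k + 1) * η := by
      have := hdist k (le_of_lt hkL)
      have hkk : (k : ℝ) * η ≤ ((k : ℝ) + 1) * η := by nlinarith
      calc ‖y k - x‖ ^ 2 ≤ (k : ℝ) * η := this
        _ ≤ _ := hkk
    have hC : (0:ℝ) ≤ ‖x - P j x‖ := norm_nonneg _
    have htri2 : ‖x - P j x‖ ≤ ‖x - y (k + 1)‖ + ‖y k - x‖ := le_trans htri (by linarith)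
    have h5 : ‖x - P j x‖ ^ 2 ≤ (‖x - y (k + 1)‖ + ‖y k - x‖) ^ 2 :=
      pow_le_pow_left₀ hC htri2 2
    have h6 : (‖x - y (k + 1)‖ + ‖y k - x‖) ^ 2
        ≤ 2 * ‖x - y (k + 1)‖ ^ 2 + 2 * ‖y k - x‖ ^ 2 := by
      nlinarith [sq_nonneg (‖x - y (k + 1)‖ - ‖y k - x‖)]
    push_cast
    linarith
  -- gap lower bound
  have hlow : (n : ℝ) * δ * ‖x‖ ^ 2 ≤ ∑ j, ‖x - P j x‖ ^ 2 := by
    have h1 : ∀ j : Fin n, ‖x - P j x‖ ^ 2 = ‖x‖ ^ 2 - ⟪P j x, x⟫ := by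
      intro j
      have hp := proj_pythagoras (hP j) x
      have h2 := inner_proj_self (hP j) x
      linarith
    have h2 : ∑ j, ‖x - P j x‖ ^ 2 = n * ‖x‖ ^ 2 - ⟪(∑ j, P j) x, x⟫ := by
      rw [Finset.sum_congr rfl (fun j _ => h1 j), Finset.sum_sub_distrib,
        Finset.sum_const, Finset.card_univ, Fintype.card_fin,
        ContinuousLinearMap.sum_apply, sum_inner, nsmul_eq_mul]
    have h3 : ⟪(∑ j, P j) x, x⟫ ≤ (n : ℝ) * ((1 - δ) * ‖x‖ ^ 2) := by
      set A := (n : ℝ)⁻¹ • ∑ j, P j with hA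
      have hSx : (∑ j, P j) x = ((n : ℝ) • A) x := by
        rw [hA, smul_smul, mul_inv_cancel₀ (ne_of_gt npos), one_smul]
      rw [hSx, ContinuousLinearMap.smul_apply, real_inner_smul_left]
      have h4 : ⟪A x, x⟫ ≤ ‖A x‖ * ‖x‖ := real_inner_le_norm _ _
      have h5 : ‖A x‖ ≤ (1 - δ) * ‖x‖ :=
        le_trans (A.le_opNorm x) (mul_le_mul_of_nonneg_right hgap (norm_nonneg x))
      have h6 : ⟪A x, x⟫ ≤ (1 - δ) * ‖x‖ ^ 2 := by nlinarith [norm_nonneg x]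
      exact mul_le_mul_of_nonneg_left h6 (le_of_lt npos)
    linarith
  -- upper bound via first appearances
  have hup : ∑ j, ‖x - P j x‖ ^ 2 ≤ 8 * (n : ℝ) ^ 2 * η := by
    have h1 : ∑ j, ‖x - P j x‖ ^ 2 ≤ ∑ j, 4 * (((m j : ℕ) : ℝ) + 1) * η :=
      Finset.sum_le_sum fun j _ => hproj j
    have h2 : ∑ j, 4 * (((m j : ℕ) : ℝ) + 1) * η
        = 4 * η * ∑ j, (((m j : ℕ) : ℝ) + 1) := by
      rw [Finset.mul_sum]
      apply Finset.sum_congr rfl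
      intros
      ring
    have h3 : (∑ j, (((m j : ℕ) : ℝ) + 1)) ≤ 2 * (n : ℝ) ^ 2 := by
      exact_mod_cast hsum
    have h4 : 4 * η * ∑ j, (((m j : ℕ) : ℝ) + 1) ≤ 4 * η * (2 * (n : ℝ) ^ 2) :=
      mul_le_mul_of_nonneg_left h3 (by positivity)
    calc ∑ j, ‖x - P j x‖ ^ 2 ≤ 4 * η * ∑ j, (((m j : ℕ) : ℝ) + 1) := by
          rw [← h2]; exact h1
      _ ≤ 4 * η * (2 * (n : ℝ) ^ 2) := h4
      _ = 8 * (n : ℝ) ^ 2 * η := by ring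
  -- conclude η is large
  have hδν : δ = 32 * n * ν := by rw [hν]; field_simp
  have hn2 : (0 : ℝ) < (n : ℝ) ^ 2 := by positivity
  have key : 8 * (n : ℝ) ^ 2 * (4 * ν * ‖x‖ ^ 2) ≤ 8 * (n : ℝ) ^ 2 * η := by
    rw [hδν] at hlow
    nlinarith [hlow, hup]
  have hηlow : 4 * ν * ‖x‖ ^ 2 ≤ η := le_of_mul_le_mul_left key (by positivity)
  have hfin2 : ‖y L‖ ^ 2 ≤ ((1 - ν) * ‖x‖) ^ 2 := by
    nlinarith [mul_nonneg (by nlinarith : (0:ℝ) ≤ 2 * ν + ν ^ 2) (sq_nonneg ‖x‖)]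
  have hfin : ‖y L‖ ≤ (1 - ν) * ‖x‖ :=
    (pow_le_pow_iff_left₀ (norm_nonneg _) (mul_nonneg hbound (norm_nonneg x))
      two_ne_zero).mp hfin2
  -- identify the product with y L
  have hprod : ∀ k (hk : k ≤ L),
      ((List.ofFn fun ℓ : Fin k => P (i (Fin.castLE hk ℓ))).reverse).prod x = y k := by
    intro k
    induction k with
    | zero => intro hk; simp [hy0]
    | succ k ih =>
      intro hk
      have hkL : k < L := hk
      rw [reverse_prod_ofFn_succ']
      have hcomp : ((fun ℓ : Fin (k + 1) => P (i (Fin.castLE hk ℓ))) ∘ Fin.castSucc)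
          = fun ℓ : Fin k => P (i (Fin.castLE (le_of_lt hkL) ℓ)) := rfl
      rw [hcomp, ih (le_of_lt hkL), hystep k, dif_pos hkL]
      rfl
  have hTx : ((List.ofFn fun ℓ => P (i ℓ)).reverse).prod x = y L := hprod L le_rfl
  rw [hTx]
  exact hfin
end

section
/- Let H be a real Hilbert space, n ≥ 1, and let P_1, …, P_n be orthogonal projections on H. Set Q = P_n P_{n−1} ⋯ P_1. Then for every f ∈ H, ‖f − Q f‖² ≤ n (‖f‖² − ‖Q f‖²). -/
open scoped RealInnerProductSpace

lemma proj_pyth {H : Type*} [NormedAddCommGroup H] [InnerProductSpace ℝ H]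
    (P : H →L[ℝ] H) (hP : IsOrthProj P) (x : H) :
    ‖x - P x‖ ^ 2 = ‖x‖ ^ 2 - ‖P x‖ ^ 2 := by
  have h : ⟪x, P x⟫ = ‖P x‖ ^ 2 := by
    rw [← real_inner_self_eq_norm_sq, hP.1, hP.2]
  rw [norm_sub_sq_real, h]; ring

/-- For orthogonal projections `P_1, …, P_n` and `Q = P_n ⋯ P_1`, one has
`‖f - Q f‖² ≤ n (‖f‖² - ‖Q f‖²)` for every `f`. -/
theorem laplacian_singular_value_comparison
    {H : Type*} [NormedAddCommGroup H] [InnerProductSpace ℝ H] [CompleteSpace H]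
    (n : ℕ) (hn : 1 ≤ n) (P : Fin n → H →L[ℝ] H)
    (hP : ∀ j, IsOrthProj (P j)) (f : H) :
    ‖f - ((List.ofFn P).reverse).prod f‖ ^ 2 ≤
      n * (‖f‖ ^ 2 - ‖((List.ofFn P).reverse).prod f‖ ^ 2) := by
  set g : ℕ → H := fun k => (((List.ofFn P).take k).reverse).prod f with hg
  have hg0 : g 0 = f := by simp [hg]
  have hgn : g n = ((List.ofFn P).reverse).prod f := by
    show (List.take n (List.ofFn P)).reverse.prod f = _; rw [List.take_of_length_le (by simp)]
  have hstep : ∀ k (hk : k < n), g (k + 1) = P ⟨k, hk⟩ (g k) := by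
    intro k hk
    simp only [hg]
    rw [List.take_succ, List.getElem?_ofFn]
    simp [hk, List.prod_append, List.ofFnNthVal]
  have hsq : ∀ k ∈ Finset.range n,
      ‖g k - g (k + 1)‖ ^ 2 = ‖g k‖ ^ 2 - ‖g (k + 1)‖ ^ 2 := by
    intro k hk
    rw [hstep k (Finset.mem_range.mp hk)]
    exact proj_pyth _ (hP _) _
  have htel : ∑ k ∈ Finset.range n, (g k - g (k + 1)) = f - g n := by
    rw [Finset.sum_range_sub' g, hg0]
  have htel2 : ∑ k ∈ Finset.range n, (‖g k‖ ^ 2 - ‖g (k + 1)‖ ^ 2)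
      = ‖f‖ ^ 2 - ‖g n‖ ^ 2 := by
    rw [Finset.sum_range_sub' (fun k => ‖g k‖ ^ 2), hg0]
  rw [← hgn, ← htel2, ← Finset.sum_congr rfl hsq]
  calc ‖f - g n‖ ^ 2 = ‖∑ k ∈ Finset.range n, (g k - g (k + 1))‖ ^ 2 := by rw [htel]
    _ ≤ (∑ k ∈ Finset.range n, ‖g k - g (k + 1)‖) ^ 2 := by
        apply pow_le_pow_left₀ (norm_nonneg _) (norm_sum_le _ _)
    _ ≤ n * ∑ k ∈ Finset.range n, ‖g k - g (k + 1)‖ ^ 2 := by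
        simpa using sq_sum_le_card_mul_sum_sq
          (s := Finset.range n) (f := fun k => ‖g k - g (k + 1)‖)
end

section
/- There exist absolute constants C > 0 and K > 0 such that the following holds for every integer n ≥ 1 and every 0 < ε ≤ 1. Let X = X_1 × … × X_n be a product of nonempty finite sets and let π be a probability distribution on X with π(x) > 0 for every x ∈ X, and set π_min = min_{x ∈ X} π(x). Then: (i) for every permutation σ of {1, …, n}, writing T = t^{SS(σ)}_mix(1/10), one has t^{GD}_mix(ε) ≤ C n⁶ T⁴ (log(2 + n T))^K log(1/(ε π_min)); and (ii) writing T* = max over permutations σ of t^{SS(σ)}_mix(1/10), one has t^{GD}_mix(ε) ≤ C n⁴ (T*)⁴ (log(2 + n T*))^K log(1/(ε π_min)). -/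
open scoped Classical

universe u

/-- The `ε`-mixing time of a transition matrix `M` with target distribution `π`:
the least `t` such that from every starting state `x`, the total variation distance
between the `t`-step distribution `M^t(x, ·)` and `π` is at most `ε`. -/
noncomputable def mixTime {S : Type u} [Fintype S] [DecidableEq S]
    (M : Matrix S S ℝ) (π : S → ℝ) (ε : ℝ) : ℕ :=
  sInf {t : ℕ | ∀ x : S, (1 / 2) * ∑ y : S, |(M ^ t) x y - π y| ≤ ε}

/-- The Gibbs update matrix at site `i`: rerandomize coordinate `i` from the conditional
distribution of `π` given the remaining coordinates. -/
noncomputable def gibbsUpdate {n : ℕ} {X : Fin n → Type u} [∀ i, Fintype (X i)]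
    (π : (∀ i, X i) → ℝ) (i : Fin n) :
    Matrix (∀ j, X j) (∀ j, X j) ℝ :=
  fun x y =>
    if ∀ j, j ≠ i → y j = x j then
      π y / ∑ z ∈ Finset.univ.filter (fun z : ∀ j, X j => ∀ j, j ≠ i → z j = x j), π z
    else 0

/-- The Glauber dynamics transition matrix `(1/n) ∑_i P_i`. -/
noncomputable def glauberMatrix {n : ℕ} {X : Fin n → Type u} [∀ i, Fintype (X i)]
    (π : (∀ i, X i) → ℝ) : Matrix (∀ j, X j) (∀ j, X j) ℝ :=
  (n : ℝ)⁻¹ • ∑ i, gibbsUpdate π i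

/-- The systematic scan transition matrix `P_σ = P_{σ(n)} ⋯ P_{σ(1)}` (matrix product). -/
noncomputable def scanMatrix {n : ℕ} {X : Fin n → Type u} [∀ i, Fintype (X i)]
    (π : (∀ i, X i) → ℝ) (σ : Equiv.Perm (Fin n)) :
    Matrix (∀ j, X j) (∀ j, X j) ℝ :=
  ((List.ofFn fun j : Fin n => gibbsUpdate π (σ j)).reverse).prod

/-- The minimum probability of a fully supported distribution on a finite nonempty set. -/
noncomputable def piMin {S : Type u} [Fintype S] [Nonempty S] (π : S → ℝ) : ℝ :=
  Finset.univ.inf' Finset.univ_nonempty π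

/-!
For a set `A` with `π(A) ≤ 1/2` write `Q_M(A) = ∑_{x ∈ A, y ∉ A} π(x) M(x, y)` (`edgeFlow`). If
`T = t_mix^{SS(σ)}(1/10)`, then `T` sweeps of the scan are `1/10`-close to `π` from every start,
so `Q_{P_σ^T}(A) ≥ (3/10) π(A)`. Flow is subadditive along products of `π`-stationary stochastic
matrices, hence `Q_{P_σ^T}(A) ≤ T ∑ᵢ Q_{Pᵢ}(A) = n T Q_GD(A)`: Glauber dynamics has conductance
`φ ≥ 3/(10 n T)`, so by Cheeger's inequality spectral gap `γ ≥ φ²/2`. Being reversible and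
positive semidefinite (an average of `π`-orthogonal projections), it multiplies `‖g‖²_π` by at
most `1 - γ` per step for mean-zero `g`; applied to the density of `δ_x` this yields
`t_mix^GD(ε) ≤ 50 n² T² log(1/(ε π_min))`, which implies both bounds with `C = 50`, `K = 1`.
-/

open Finset Matrix

lemma sq_max_sub_max_add_sq_max_neg_sub_le (a b : ℝ) :
    (max a 0 - max b 0) ^ 2 + (max (-a) 0 - max (-b) 0) ^ 2 ≤ (a - b) ^ 2 := by
  rcases le_total a 0 with ha | ha <;> rcases le_total b 0 with hb | hb <;>
    simp [ha, hb] <;> nlinarith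

lemma sq_max_add_sq_max_neg (a : ℝ) : max a 0 ^ 2 + max (-a) 0 ^ 2 = a ^ 2 := by
  rcases le_total a 0 with ha | ha <;> simp [ha]

lemma max_sub_zero_add_min (a t : ℝ) : max (a - t) 0 + min a t = a := by
  rcases le_total a t with ha | ha <;> simp [ha]

lemma abs_sub_eq_abs_max_sub_sub_add_abs_min_sub (a b t : ℝ) :
    |a - b| = |max (a - t) 0 - max (b - t) 0| + |min a t - min b t| := by
  grind

namespace MarkovChain

variable {V : Type u} [Fintype V] {π : V → ℝ} {M N : Matrix V V ℝ}

section Reversibility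

def IsReversible (π : V → ℝ) (M : Matrix V V ℝ) : Prop :=
  ∀ x y, π x * M x y = π y * M y x

variable [DecidableEq V]

def stationaryMatrices (π : V → ℝ) : Submonoid (Matrix V V ℝ) where
  carrier := {M | π ᵥ* M = π}
  mul_mem' {M N} (hM : π ᵥ* M = π) (hN : π ᵥ* N = π) := by
    change π ᵥ* (M * N) = π
    rw [← vecMul_vecMul, hM, hN]
  one_mem' := vecMul_one π

lemma mem_stationaryMatrices : M ∈ stationaryMatrices π ↔ ∀ y, ∑ x, π x * M x y = π y := by
  simp [stationaryMatrices, funext_iff, vecMul, dotProduct]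

lemma isReversible_iff : IsReversible π M ↔ diagonal π * M = Mᵀ * diagonal π := by
  simp [IsReversible, ← Matrix.ext_iff, mul_comm]

lemma IsReversible.pow (hM : IsReversible π M) (t : ℕ) : IsReversible π (M ^ t) := by
  rw [isReversible_iff] at *
  induction t with
  | zero => simp
  | succ t ih =>
    rw [pow_succ, ← mul_assoc, ih, mul_assoc, hM, ← mul_assoc, ← transpose_mul, ← pow_succ',
      ← pow_succ]

lemma IsReversible.mem_stationaryMatrices (hrev : IsReversible π M)
    (hM : M ∈ rowStochastic ℝ V) : M ∈ stationaryMatrices π := by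
  refine MarkovChain.mem_stationaryMatrices.2 fun y => ?_
  simp_rw [hrev _ y, ← mul_sum, sum_row_of_mem_rowStochastic hM, mul_one]

lemma sum_sum_mul_left (hM : M ∈ rowStochastic ℝ V) (F : V → ℝ) :
    ∑ x, ∑ y, π x * M x y * F x = ∑ x, π x * F x := by
  refine sum_congr rfl fun x _ => ?_
  rw [← sum_mul, ← mul_sum, sum_row_of_mem_rowStochastic hM, mul_one]

lemma sum_sum_mul_right (hM : M ∈ stationaryMatrices π) (F : V → ℝ) :
    ∑ x, ∑ y, π x * M x y * F y = ∑ y, π y * F y := by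
  rw [sum_comm]
  exact sum_congr rfl fun y _ => by rw [← sum_mul, mem_stationaryMatrices.1 hM]

end Reversibility

section EdgeFlow

variable [DecidableEq V]

def edgeFlow (π : V → ℝ) (M : Matrix V V ℝ) (A : Finset V) : ℝ :=
  ∑ x ∈ A, ∑ y ∈ Aᶜ, π x * M x y

lemma edgeFlow_one (A : Finset V) : edgeFlow π 1 A = 0 :=
  sum_eq_zero fun x hx => sum_eq_zero fun y hy => by
    rw [one_apply_ne (ne_of_mem_of_not_mem hx (mem_compl.1 hy)), mul_zero]

lemma IsReversible.edgeFlow_compl (hrev : IsReversible π M) (A : Finset V) :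
    edgeFlow π M Aᶜ = edgeFlow π M A := by
  rw [edgeFlow, compl_compl, sum_comm]
  exact sum_congr rfl fun y _ => sum_congr rfl fun x _ => hrev x y

/-- A path from `A` to `Aᶜ` through `z` leaves `A` either in its first step (`z ∉ A`) or in its
second (`z ∈ A`). -/
lemma edgeFlow_mul_le (hπ0 : ∀ x, 0 ≤ π x) (hM : M ∈ rowStochastic ℝ V)
    (hMπ : M ∈ stationaryMatrices π) (hN : N ∈ rowStochastic ℝ V) (A : Finset V) :
    edgeFlow π (M * N) A ≤ edgeFlow π M A + edgeFlow π N A := by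
  set a : V → ℝ := fun z => ∑ x ∈ A, π x * M x z
  set b : V → ℝ := fun z => ∑ y ∈ Aᶜ, N z y
  have hflow : edgeFlow π (M * N) A = ∑ z, a z * b z :=
    calc edgeFlow π (M * N) A = ∑ x ∈ A, ∑ y ∈ Aᶜ, ∑ z, π x * M x z * N z y := by
          simp only [edgeFlow, mul_apply, mul_sum, mul_assoc]
      _ = ∑ x ∈ A, ∑ z, ∑ y ∈ Aᶜ, π x * M x z * N z y := sum_congr rfl fun x _ => sum_comm
      _ = ∑ z, ∑ x ∈ A, ∑ y ∈ Aᶜ, π x * M x z * N z y := sum_comm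
      _ = ∑ z, a z * b z := by simp only [a, b, sum_mul]; simp only [mul_sum]
  have ha0 z : 0 ≤ a z := sum_nonneg fun x _ => mul_nonneg (hπ0 x) (nonneg_of_mem_rowStochastic hM)
  have hb0 z : 0 ≤ b z := sum_nonneg fun y _ => nonneg_of_mem_rowStochastic hN
  have ha z : a z ≤ π z := by
    rw [← mem_stationaryMatrices.1 hMπ z]
    exact sum_le_sum_of_subset_of_nonneg (subset_univ _)
      fun x _ _ => mul_nonneg (hπ0 x) (nonneg_of_mem_rowStochastic hM)
  have hb z : b z ≤ 1 := by
    rw [← sum_row_of_mem_rowStochastic hN z]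
    exact sum_le_sum_of_subset_of_nonneg (subset_univ _)
      fun y _ _ => nonneg_of_mem_rowStochastic hN
  have hleave : ∑ z ∈ Aᶜ, a z * b z ≤ edgeFlow π M A := by
    rw [edgeFlow, sum_comm]
    exact sum_le_sum fun z _ => mul_le_of_le_one_right (ha0 z) (hb z)
  have hstay : ∑ z ∈ A, a z * b z ≤ edgeFlow π N A := by
    simp only [edgeFlow, b, ← mul_sum]
    exact sum_le_sum fun z _ => mul_le_mul_of_nonneg_right (ha z) (hb0 z)
  rw [hflow, ← sum_add_sum_compl A]
  linarith

lemma edgeFlow_pow_le (hπ0 : ∀ x, 0 ≤ π x) (hM : M ∈ rowStochastic ℝ V)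
    (hMπ : M ∈ stationaryMatrices π) (A : Finset V) (t : ℕ) :
    edgeFlow π (M ^ t) A ≤ t * edgeFlow π M A := by
  induction t with
  | zero => simp [edgeFlow_one]
  | succ t ih =>
    rw [pow_succ']
    have := edgeFlow_mul_le hπ0 hM hMπ (pow_mem hM t) A
    push_cast
    linarith

lemma edgeFlow_list_prod_le (hπ0 : ∀ x, 0 ≤ π x) (A : Finset V) {l : List (Matrix V V ℝ)}
    (hl : ∀ M ∈ l, M ∈ rowStochastic ℝ V ∧ M ∈ stationaryMatrices π) :
    edgeFlow π l.prod A ≤ (l.map (edgeFlow π · A)).sum := by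
  induction l with
  | nil => simp [edgeFlow_one]
  | cons M l ih =>
    simp only [List.mem_cons, forall_eq_or_imp] at hl
    rw [List.prod_cons, List.map_cons, List.sum_cons]
    have := edgeFlow_mul_le hπ0 hl.1.1 hl.1.2
      (Submonoid.list_prod_mem _ fun N hN => (hl.2 N hN).1) A
    linarith [ih hl.2]

lemma edgeFlow_smul (c : ℝ) (M : Matrix V V ℝ) (A : Finset V) :
    edgeFlow π (c • M) A = c * edgeFlow π M A := by
  simp only [edgeFlow, Matrix.smul_apply, smul_eq_mul, mul_sum]
  exact sum_congr rfl fun x _ => sum_congr rfl fun y _ => by ring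

lemma edgeFlow_sum {ι : Type*} (s : Finset ι) (M : ι → Matrix V V ℝ) (A : Finset V) :
    edgeFlow π (∑ i ∈ s, M i) A = ∑ i ∈ s, edgeFlow π (M i) A := by
  simp only [edgeFlow, Matrix.sum_apply, mul_sum]
  symm
  rw [sum_comm]
  exact sum_congr rfl fun x _ => sum_comm

lemma mul_le_edgeFlow_of_tv_le (hπ0 : ∀ x, 0 ≤ π x) {δ : ℝ}
    (hM : ∀ x, 1 / 2 * ∑ y, |M x y - π y| ≤ δ) (A : Finset V) :
    (∑ y ∈ Aᶜ, π y - 2 * δ) * ∑ x ∈ A, π x ≤ edgeFlow π M A := by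
  have hrow x : ∑ y ∈ Aᶜ, π y - 2 * δ ≤ ∑ y ∈ Aᶜ, M x y := by
    have h1 : ∑ y ∈ Aᶜ, (π y - M x y) ≤ ∑ y, |M x y - π y| :=
      (sum_le_sum fun y _ => by rw [abs_sub_comm]; exact le_abs_self _).trans
        (sum_le_sum_of_subset_of_nonneg (subset_univ _) fun y _ _ => abs_nonneg _)
    rw [sum_sub_distrib] at h1
    linarith [hM x]
  rw [mul_comm, sum_mul]
  simp only [edgeFlow, ← mul_sum]
  exact sum_le_sum fun x _ => mul_le_mul_of_nonneg_left (hrow x) (hπ0 x)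

end EdgeFlow

section TotalVariation

lemma piMin_pos [Nonempty V] (hπ : ∀ x, 0 < π x) : 0 < piMin π := by
  obtain ⟨x, _, hx⟩ := exists_mem_eq_inf' univ_nonempty π
  rw [piMin, hx]
  exact hπ x

lemma piMin_le [Nonempty V] (x : V) : piMin π ≤ π x :=
  inf'_le _ (mem_univ x)

lemma piMin_le_one [Nonempty V] (hπ0 : ∀ x, 0 ≤ π x) (hπ1 : ∑ x, π x = 1) : piMin π ≤ 1 :=
  (piMin_le (Classical.arbitrary V)).trans (hπ1 ▸ single_le_sum (fun y _ => hπ0 y) (mem_univ _))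

lemma log_one_div_mul_piMin_nonneg [Nonempty V] (hπ : ∀ x, 0 < π x) (hπ1 : ∑ x, π x = 1)
    {ε : ℝ} (hε : 0 < ε) (hε1 : ε ≤ 1) : 0 ≤ Real.log (1 / (ε * piMin π)) :=
  Real.log_nonneg <| one_le_one_div (mul_pos hε (piMin_pos hπ))
    (mul_le_one₀ hε1 (piMin_pos hπ).le (piMin_le_one (fun x => (hπ x).le) hπ1))

lemma exists_le_half [Nontrivial V] (hπ0 : ∀ x, 0 ≤ π x) (hπ1 : ∑ x, π x = 1) :
    ∃ x, π x ≤ 1 / 2 := by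
  obtain ⟨x, y, hxy⟩ := exists_pair_ne V
  have : π x + π y ≤ 1 := hπ1 ▸ (sum_pair hxy).symm.trans_le
    (sum_le_sum_of_subset_of_nonneg (subset_univ _) fun z _ _ => hπ0 z)
  by_contra! h
  linarith [h x, h y]

lemma log_two_le_log_one_div_mul_piMin [Nonempty V] [Nontrivial V] (hπ : ∀ x, 0 < π x)
    (hπ1 : ∑ x, π x = 1) {ε : ℝ} (hε : 0 < ε) (hε1 : ε ≤ 1) :
    Real.log 2 ≤ Real.log (1 / (ε * piMin π)) := by
  obtain ⟨x, hx⟩ := exists_le_half (fun x => (hπ x).le) hπ1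
  refine Real.log_le_log (by norm_num) ?_
  rw [le_div_iff₀ (mul_pos hε (piMin_pos hπ))]
  nlinarith [piMin_le (π := π) x, piMin_pos hπ]

variable [DecidableEq V]

lemma tv_one_eq (hπ0 : ∀ x, 0 ≤ π x) (hπ1 : ∑ x, π x = 1) (x : V) :
    1 / 2 * ∑ y, |(1 : Matrix V V ℝ) x y - π y| = 1 - π x := by
  have hrest : ∑ y ∈ univ.erase x, π y = 1 - π x := by
    rw [← hπ1, ← add_sum_erase _ _ (mem_univ x)]
    ring
  have hπx : π x ≤ 1 := by linarith [sum_nonneg fun y (_ : y ∈ univ.erase x) => hπ0 y]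
  rw [← add_sum_erase _ _ (mem_univ x), one_apply_eq, abs_of_nonneg (by linarith),
    sum_congr rfl fun y hy => by
      rw [one_apply_ne (ne_of_mem_erase hy).symm, zero_sub, abs_neg, abs_of_nonneg (hπ0 y)],
    hrest]
  ring

lemma mixTime_le_of_tv_le {ε : ℝ} {t : ℕ} (h : ∀ x, 1 / 2 * ∑ y, |(M ^ t) x y - π y| ≤ ε) :
    mixTime M π ε ≤ t :=
  Nat.sInf_le h

lemma mixTime_eq_zero [Subsingleton V] (hπ0 : ∀ x, 0 ≤ π x) (hπ1 : ∑ x, π x = 1) {ε : ℝ}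
    (hε : 0 ≤ ε) : mixTime M π ε = 0 :=
  Nat.le_zero.1 <| mixTime_le_of_tv_le fun x => by
    rwa [pow_zero, tv_one_eq hπ0 hπ1, ← hπ1, Fintype.sum_subsingleton _ x, sub_self]

lemma pos_of_forall_tv_pow_le [Nontrivial V] (hπ0 : ∀ x, 0 ≤ π x) (hπ1 : ∑ x, π x = 1)
    {t : ℕ} {δ : ℝ} (hδ : δ < 1 / 2) (h : ∀ x, 1 / 2 * ∑ y, |(M ^ t) x y - π y| ≤ δ) :
    0 < t := by
  obtain ⟨x, hx⟩ := exists_le_half hπ0 hπ1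
  refine Nat.pos_of_ne_zero fun ht => ?_
  have := h x
  rw [ht, pow_zero, tv_one_eq hπ0 hπ1] at this
  linarith

lemma tv_pow_mixTime_le {ε : ℝ} (h : ∃ t : ℕ, ∀ x, 1 / 2 * ∑ y, |(M ^ t) x y - π y| ≤ ε)
    (x : V) : 1 / 2 * ∑ y, |(M ^ mixTime M π ε) x y - π y| ≤ ε :=
  Nat.sInf_mem h x

lemma sum_abs_vecMul_le (hπ1 : ∑ x, π x = 1) (hM : M ∈ rowStochastic ℝ V) {γ : ℝ}
    (hγ : ∀ x y, γ * π y ≤ M x y) {ν : V → ℝ} (hν : ∑ x, ν x = 0) :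
    ∑ y, |(ν ᵥ* M) y| ≤ (1 - γ) * ∑ x, |ν x| := by
  have hcol y : |(ν ᵥ* M) y| ≤ ∑ x, |ν x| * (M x y - γ * π y) := by
    have : (ν ᵥ* M) y = ∑ x, ν x * (M x y - γ * π y) := by
      simp only [vecMul, dotProduct, mul_sub, sum_sub_distrib, ← sum_mul, hν, zero_mul, sub_zero]
    rw [this]
    refine (abs_sum_le_sum_abs _ _).trans_eq (sum_congr rfl fun x _ => ?_)
    rw [abs_mul, abs_of_nonneg (sub_nonneg.2 (hγ x y))]
  calc ∑ y, |(ν ᵥ* M) y| ≤ ∑ y, ∑ x, |ν x| * (M x y - γ * π y) := sum_le_sum fun y _ => hcol y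
    _ = (1 - γ) * ∑ x, |ν x| := by
      rw [sum_comm, mul_sum]
      refine sum_congr rfl fun x _ => ?_
      rw [← mul_sum, sum_sub_distrib, sum_row_of_mem_rowStochastic hM, ← mul_sum, hπ1]
      ring

/-- Doeblin's argument: a matrix with positive entries dominates `γ π` row by row, so each step
contracts the total variation distance to `π` by the factor `1 - γ`. -/
theorem exists_forall_tv_pow_le [Nonempty V] (hπ0 : ∀ x, 0 ≤ π x) (hπ1 : ∑ x, π x = 1)
    (hM : M ∈ rowStochastic ℝ V) (hMπ : M ∈ stationaryMatrices π) (hMpos : ∀ x y, 0 < M x y)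
    {ε : ℝ} (hε : 0 < ε) : ∃ t : ℕ, ∀ x, 1 / 2 * ∑ y, |(M ^ t) x y - π y| ≤ ε := by
  obtain ⟨p, hp⟩ := Finite.exists_min fun p : V × V => M p.1 p.2
  set γ := M p.1 p.2
  have hπle y : π y ≤ 1 := hπ1 ▸ single_le_sum (fun z _ => hπ0 z) (mem_univ y)
  have hγ x y : γ * π y ≤ M x y :=
    (mul_le_of_le_one_right (hMpos _ _).le (hπle y)).trans (hp (x, y))
  have hγ1 : γ ≤ 1 := le_one_of_mem_rowStochastic hM
  have hdecay x t : ∑ y, |(M ^ t) x y - π y| ≤ 2 * (1 - γ) ^ t := by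
    induction t with
    | zero =>
      rw [pow_zero, pow_zero]
      linarith [tv_one_eq hπ0 hπ1 x, hπ0 x]
    | succ t ih =>
      have hrow : (M ^ (t + 1)) x - π = ((M ^ t) x - π) ᵥ* M := by
        rw [pow_succ, mul_apply_eq_vecMul, sub_vecMul, show π ᵥ* M = π from hMπ]
      have hν : ∑ y, ((M ^ t) x - π) y = 0 := by
        simp [sum_sub_distrib, sum_row_of_mem_rowStochastic (pow_mem hM t), hπ1]
      calc ∑ y, |(M ^ (t + 1)) x y - π y| = ∑ y, |(((M ^ t) x - π) ᵥ* M) y| := by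
            rw [← hrow]; rfl
        _ ≤ (1 - γ) * ∑ y, |(M ^ t) x y - π y| := sum_abs_vecMul_le hπ1 hM hγ hν
        _ ≤ (1 - γ) * (2 * (1 - γ) ^ t) := by gcongr
        _ = 2 * (1 - γ) ^ (t + 1) := by ring
  obtain ⟨t, ht⟩ := exists_pow_lt_of_lt_one hε (by linarith [hMpos p.1 p.2] : 1 - γ < 1)
  exact ⟨t, fun x => by linarith [hdecay x t]⟩

end TotalVariation

section SpectralGap

variable {γ : ℝ}

def weightedInner (π f g : V → ℝ) : ℝ :=
  ∑ x, π x * (f x * g x)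

def SpectralGapGE (π : V → ℝ) (M : Matrix V V ℝ) (γ : ℝ) : Prop :=
  ∀ g : V → ℝ, π ⬝ᵥ g = 0 → weightedInner π (M *ᵥ g) g ≤ (1 - γ) * weightedInner π g g

lemma weightedInner_self_nonneg (hπ0 : ∀ x, 0 ≤ π x) (f : V → ℝ) : 0 ≤ weightedInner π f f :=
  sum_nonneg fun x _ => mul_nonneg (hπ0 x) (mul_self_nonneg _)

lemma weightedInner_comm (f g : V → ℝ) : weightedInner π f g = weightedInner π g f := by
  simp only [weightedInner, mul_comm (f _)]

lemma sq_weightedInner_le (hπ0 : ∀ x, 0 ≤ π x) (f g : V → ℝ) :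
    weightedInner π f g ^ 2 ≤ weightedInner π f f * weightedInner π g g :=
  sum_sq_le_sum_mul_sum_of_sq_le_mul _ (fun x _ => mul_nonneg (hπ0 x) (mul_self_nonneg _))
    (fun x _ => mul_nonneg (hπ0 x) (mul_self_nonneg _)) fun x _ => le_of_eq (by ring)

lemma sq_sum_mul_abs_le (hπ0 : ∀ x, 0 ≤ π x) (hπ1 : ∑ x, π x = 1) (h : V → ℝ) :
    (∑ y, π y * |h y|) ^ 2 ≤ weightedInner π h h := by
  have := sq_weightedInner_le hπ0 (fun y => |h y|) 1
  simpa [weightedInner, hπ1] using this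

lemma IsReversible.weightedInner_mulVec (hrev : IsReversible π M) (f g : V → ℝ) :
    weightedInner π (M *ᵥ f) g = weightedInner π f (M *ᵥ g) :=
  calc weightedInner π (M *ᵥ f) g = ∑ x, ∑ y, π x * M x y * (f y * g x) := by
        simp only [weightedInner, mulVec, dotProduct, sum_mul, mul_sum]
        exact sum_congr rfl fun x _ => sum_congr rfl fun y _ => by ring
    _ = ∑ x, ∑ y, π y * M y x * (f y * g x) :=
        sum_congr rfl fun x _ => sum_congr rfl fun y _ => by rw [hrev]
    _ = weightedInner π f (M *ᵥ g) := by
        rw [sum_comm]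
        simp only [weightedInner, mulVec, dotProduct, mul_sum]
        exact sum_congr rfl fun y _ => sum_congr rfl fun x _ => by ring

lemma IsReversible.sq_weightedInner_mulVec_le (hrev : IsReversible π M)
    (hpsd : ∀ f, 0 ≤ weightedInner π (M *ᵥ f) f) (f g : V → ℝ) :
    weightedInner π (M *ᵥ f) g ^ 2 ≤
      weightedInner π (M *ᵥ f) f * weightedInner π (M *ᵥ g) g := by
  let B : LinearMap.BilinForm ℝ (V → ℝ) :=
    LinearMap.mk₂ ℝ (fun f g => weightedInner π (M *ᵥ f) g)
      (fun f₁ f₂ g => by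
        simp only [weightedInner, mulVec_add, Pi.add_apply, ← sum_add_distrib]
        exact sum_congr rfl fun _ _ => by ring)
      (fun c f g => by
        simp only [weightedInner, mulVec_smul, Pi.smul_apply, smul_eq_mul, mul_sum]
        exact sum_congr rfl fun _ _ => by ring)
      (fun f g₁ g₂ => by
        simp only [weightedInner, Pi.add_apply, ← sum_add_distrib]
        exact sum_congr rfl fun _ _ => by ring)
      (fun c f g => by
        simp only [weightedInner, Pi.smul_apply, smul_eq_mul, mul_sum]
        exact sum_congr rfl fun _ _ => by ring)
  refine B.apply_sq_le_of_symm hpsd ⟨fun f g => ?_⟩ f g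
  simp only [B, LinearMap.mk₂_apply, RingHom.id_apply]
  rw [hrev.weightedInner_mulVec, weightedInner_comm]

lemma IsReversible.weightedInner_mulVec_self_nonneg_of_mul_self (hrev : IsReversible π M)
    (hπ0 : ∀ x, 0 ≤ π x) (hM : M * M = M) (f : V → ℝ) : 0 ≤ weightedInner π (M *ᵥ f) f := by
  rw [← hM, ← mulVec_mulVec, hrev.weightedInner_mulVec]
  exact weightedInner_self_nonneg hπ0 _

variable [DecidableEq V]

lemma weightedInner_mulVec_self_le (hπ0 : ∀ x, 0 ≤ π x) (hM : M ∈ rowStochastic ℝ V)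
    (hMπ : M ∈ stationaryMatrices π) (f : V → ℝ) :
    weightedInner π (M *ᵥ f) (M *ᵥ f) ≤ weightedInner π f f := by
  have hjensen x : (M *ᵥ f) x * (M *ᵥ f) x ≤ ∑ y, M x y * (f y * f y) := by
    have := sum_sq_le_sum_mul_sum_of_sq_le_mul univ (r := fun y => M x y * f y)
      (fun y _ => nonneg_of_mem_rowStochastic hM)
      (fun y _ => mul_nonneg (nonneg_of_mem_rowStochastic hM) (mul_self_nonneg (f y)))
      fun y _ => le_of_eq (by ring)
    rwa [sum_row_of_mem_rowStochastic hM, one_mul, sq] at this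
  calc weightedInner π (M *ᵥ f) (M *ᵥ f) ≤ ∑ x, π x * ∑ y, M x y * (f y * f y) :=
        sum_le_sum fun x _ => mul_le_mul_of_nonneg_left (hjensen x) (hπ0 x)
    _ = ∑ x, ∑ y, π x * M x y * (f y * f y) := by simp only [mul_sum, mul_assoc]
    _ = weightedInner π f f := sum_sum_mul_right hMπ _

/-- Cauchy–Schwarz for the form `⟨M ·, ·⟩_π` gives
`‖Mg‖⁴ = ⟨Mg, Mg⟩² ≤ ⟨Mg, g⟩ ⟨M²g, Mg⟩ ≤ ⟨Mg, g⟩ ‖Mg‖²`. -/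
lemma IsReversible.weightedInner_mulVec_self_le_of_psd (hrev : IsReversible π M)
    (hπ0 : ∀ x, 0 ≤ π x) (hM : M ∈ rowStochastic ℝ V)
    (hpsd : ∀ f, 0 ≤ weightedInner π (M *ᵥ f) f) (g : V → ℝ) :
    weightedInner π (M *ᵥ g) (M *ᵥ g) ≤ weightedInner π (M *ᵥ g) g := by
  set N := weightedInner π (M *ᵥ g) (M *ᵥ g)
  have hN0 : 0 ≤ N := weightedInner_self_nonneg hπ0 _
  have hMM : weightedInner π (M *ᵥ (M *ᵥ g)) (M *ᵥ g) ≤ N := by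
    have hcs := sq_weightedInner_le hπ0 (M *ᵥ (M *ᵥ g)) (M *ᵥ g)
    have hc := weightedInner_mulVec_self_le hπ0 hM (hrev.mem_stationaryMatrices hM) (M *ᵥ g)
    refine (pow_le_pow_iff_left₀ (hpsd _) hN0 two_ne_zero).1 (hcs.trans ?_)
    rw [sq]
    exact mul_le_mul_of_nonneg_right hc hN0
  have hN : N ^ 2 ≤ weightedInner π (M *ᵥ g) g * N :=
    (hrev.sq_weightedInner_mulVec_le hpsd g (M *ᵥ g)).trans
      (mul_le_mul_of_nonneg_left hMM (hpsd g))
  nlinarith [hpsd g]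

lemma SpectralGapGE.weightedInner_pow_mulVec_le (hgap : SpectralGapGE π M γ) (hγ1 : γ ≤ 1)
    (hπ0 : ∀ x, 0 ≤ π x) (hM : M ∈ rowStochastic ℝ V) (hrev : IsReversible π M)
    (hpsd : ∀ f, 0 ≤ weightedInner π (M *ᵥ f) f) {g : V → ℝ} (hg : π ⬝ᵥ g = 0) (t : ℕ) :
    weightedInner π (M ^ t *ᵥ g) (M ^ t *ᵥ g) ≤ (1 - γ) ^ t * weightedInner π g g := by
  induction t with
  | zero => simp
  | succ t ih =>
    set h := M ^ t *ᵥ g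
    have hh : π ⬝ᵥ h = 0 := by
      rw [dotProduct_mulVec, show π ᵥ* M ^ t = π from pow_mem (hrev.mem_stationaryMatrices hM) t,
        hg]
    rw [pow_succ', ← mulVec_mulVec, pow_succ, mul_comm _ (1 - γ), mul_assoc]
    calc weightedInner π (M *ᵥ h) (M *ᵥ h) ≤ weightedInner π (M *ᵥ h) h :=
          hrev.weightedInner_mulVec_self_le_of_psd hπ0 hM hpsd h
      _ ≤ (1 - γ) * weightedInner π h h := hgap h hh
      _ ≤ (1 - γ) * ((1 - γ) ^ t * weightedInner π g g) := by gcongr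

lemma weightedInner_single_sub_one (hπ : ∀ x, 0 < π x) (hπ1 : ∑ x, π x = 1) (x : V) :
    weightedInner π (Pi.single x (π x)⁻¹ - 1) (Pi.single x (π x)⁻¹ - 1) = (π x)⁻¹ - 1 := by
  set g : V → ℝ := Pi.single x (π x)⁻¹ - 1
  have hrest : ∑ y ∈ univ.erase x, π y * (g y * g y) = 1 - π x := by
    have hgy y (hy : y ∈ univ.erase x) : g y = -1 := by
      simp [g, Pi.single_eq_of_ne (ne_of_mem_erase hy)]
    rw [sum_congr rfl fun y hy => by rw [hgy y hy, neg_mul_neg, one_mul, mul_one], ← hπ1,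
      ← add_sum_erase _ _ (mem_univ x)]
    ring
  rw [weightedInner, ← add_sum_erase _ _ (mem_univ x), hrest]
  simp only [g, Pi.sub_apply, Pi.single_eq_same, Pi.one_apply]
  field_simp [(hπ x).ne']
  ring

lemma IsReversible.mulVec_pow_single_sub_one (hrev : IsReversible π M) (hπ : ∀ x, 0 < π x)
    (hM : M ∈ rowStochastic ℝ V) (x : V) (t : ℕ) (y : V) :
    (M ^ t *ᵥ (Pi.single x (π x)⁻¹ - 1)) y = (M ^ t) x y / π y - 1 := by
  rw [mulVec_sub, one_vecMul_of_mem_rowStochastic (pow_mem hM t), Pi.sub_apply, Pi.one_apply,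
    sub_left_inj, eq_div_iff (hπ y).ne']
  simp only [mulVec, dotProduct_single]
  field_simp [(hπ x).ne']
  linarith [hrev.pow t x y]

theorem SpectralGapGE.tv_pow_sq_le (hgap : SpectralGapGE π M γ) (hγ1 : γ ≤ 1)
    (hπ : ∀ x, 0 < π x) (hπ1 : ∑ x, π x = 1) (hM : M ∈ rowStochastic ℝ V)
    (hrev : IsReversible π M) (hpsd : ∀ f, 0 ≤ weightedInner π (M *ᵥ f) f) (x : V) (t : ℕ) :
    (1 / 2 * ∑ y, |(M ^ t) x y - π y|) ^ 2 ≤ (1 - γ) ^ t / (4 * π x) := by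
  have hπ0 y := (hπ y).le
  set g : V → ℝ := Pi.single x (π x)⁻¹ - 1
  have hg : π ⬝ᵥ g = 0 := by
    simp [g, dotProduct_sub, dotProduct_single, dotProduct_one, hπ1, (hπ x).ne']
  have htv : ∑ y, |(M ^ t) x y - π y| = ∑ y, π y * |(M ^ t *ᵥ g) y| := by
    refine sum_congr rfl fun y _ => ?_
    rw [hrev.mulVec_pow_single_sub_one hπ hM, ← abs_of_pos (hπ y), ← abs_mul, abs_of_pos (hπ y)]
    congr 1
    field_simp [(hπ y).ne']
  have hL2 := (sq_sum_mul_abs_le hπ0 hπ1 _).trans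
    (hgap.weightedInner_pow_mulVec_le hγ1 hπ0 hM hrev hpsd hg t)
  rw [weightedInner_single_sub_one hπ hπ1] at hL2
  calc (1 / 2 * ∑ y, |(M ^ t) x y - π y|) ^ 2 = (∑ y, π y * |(M ^ t *ᵥ g) y|) ^ 2 / 4 := by
        rw [htv]; ring
    _ ≤ (1 - γ) ^ t * ((π x)⁻¹ - 1) / 4 := by gcongr
    _ ≤ (1 - γ) ^ t * (π x)⁻¹ / 4 := by gcongr; linarith
    _ = (1 - γ) ^ t / (4 * π x) := by field_simp

theorem SpectralGapGE.mixTime_le [Nonempty V] (hgap : SpectralGapGE π M γ) (hγ0 : 0 < γ)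
    (hγ1 : γ ≤ 1) (hπ : ∀ x, 0 < π x) (hπ1 : ∑ x, π x = 1) (hM : M ∈ rowStochastic ℝ V)
    (hrev : IsReversible π M) (hpsd : ∀ f, 0 ≤ weightedInner π (M *ᵥ f) f) {ε : ℝ}
    (hε : 0 < ε) : mixTime M π ε ≤ ⌈2 / γ * Real.log (1 / (ε * piMin π))⌉₊ := by
  set L := Real.log (1 / (ε * piMin π)) with hL
  set t := ⌈2 / γ * L⌉₊
  have hpm := piMin_pos hπ
  have hεπ : 0 < ε * piMin π := mul_pos hε hpm
  have hγt : 2 * L ≤ γ * t :=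
    calc 2 * L = γ * (2 / γ * L) := by field_simp
      _ ≤ γ * t := by gcongr; exact Nat.le_ceil _
  have hdecay : (1 - γ) ^ t ≤ (ε * piMin π) ^ 2 :=
    calc (1 - γ) ^ t ≤ Real.exp (-γ) ^ t :=
          pow_le_pow_left₀ (by linarith) (by linarith [Real.add_one_le_exp (-γ)]) t
      _ = Real.exp (-(γ * t)) := by rw [← Real.exp_nat_mul]; ring_nf
      _ ≤ Real.exp (-(2 * L)) := by gcongr
      _ = (ε * piMin π) ^ 2 := by
          rw [show L = -Real.log (ε * piMin π) by rw [hL, one_div, Real.log_inv], mul_neg, neg_neg,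
            two_mul, Real.exp_add, Real.exp_log hεπ, sq]
  refine mixTime_le_of_tv_le fun x => ?_
  have hx : (1 - γ) ^ t / (4 * π x) ≤ ε ^ 2 := by
    have hpm1 := piMin_le_one (fun y => (hπ y).le) hπ1
    rw [div_le_iff₀ (by linarith [hπ x])]
    calc (1 - γ) ^ t ≤ ε ^ 2 * (piMin π * piMin π) := hdecay.trans_eq (by ring)
      _ ≤ ε ^ 2 * (1 * π x) := by gcongr; exact piMin_le x
      _ ≤ ε ^ 2 * (4 * π x) := by gcongr; exacts [(hπ x).le, by norm_num]
  exact (pow_le_pow_iff_left₀ (by positivity) hε.le two_ne_zero).1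
    ((hgap.tv_pow_sq_le hγ1 hπ hπ1 hM hrev hpsd x t).trans hx)

end SpectralGap

section Cheeger

variable {φ : ℝ}

noncomputable def dirichletForm (π : V → ℝ) (M : Matrix V V ℝ) (f : V → ℝ) : ℝ :=
  1 / 2 * ∑ x, ∑ y, π x * M x y * (f x - f y) ^ 2

lemma dirichletForm_nonneg (hπ0 : ∀ x, 0 ≤ π x) (hM0 : ∀ x y, 0 ≤ M x y) (f : V → ℝ) :
    0 ≤ dirichletForm π M f :=
  mul_nonneg (by norm_num) <| sum_nonneg fun x _ => sum_nonneg fun y _ =>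
    mul_nonneg (mul_nonneg (hπ0 x) (hM0 x y)) (sq_nonneg _)

lemma exists_median [Nonempty V] (hπ0 : ∀ x, 0 ≤ π x) (hπ1 : ∑ x, π x = 1) (f : V → ℝ) :
    ∃ m, ∑ x ∈ univ.filter (f · < m), π x ≤ 1 / 2 ∧ ∑ x ∈ univ.filter (m < f ·), π x ≤ 1 / 2 := by
  set C := univ.filter fun x => 1 / 2 ≤ ∑ y ∈ univ.filter (f · ≤ f x), π y
  obtain ⟨xmax, -, hxmax⟩ := univ.exists_max_image f univ_nonempty
  have hC : C.Nonempty := ⟨xmax, mem_filter.2 ⟨mem_univ _, by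
    rw [filter_true_of_mem fun y _ => hxmax y (mem_univ y), hπ1]; norm_num⟩⟩
  obtain ⟨x₀, hx₀C, hx₀⟩ := C.exists_min_image f hC
  refine ⟨f x₀, ?_, ?_⟩
  · by_contra! hlow
    obtain ⟨x₁, hx₁, hmax⟩ := exists_max_image _ f
      (nonempty_of_sum_ne_zero (s := univ.filter (f · < f x₀)) (f := π) (by linarith))
    have hx₁C : x₁ ∈ C := mem_filter.2 ⟨mem_univ _, hlow.le.trans <|
      sum_le_sum_of_subset_of_nonneg (fun x hx => mem_filter.2 ⟨mem_univ _, hmax x hx⟩)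
        fun _ _ _ => hπ0 _⟩
    exact (hx₀ x₁ hx₁C).not_gt (mem_filter.1 hx₁).2
  · have hx₀' := (mem_filter.1 hx₀C).2
    have hsplit := sum_filter_add_sum_filter_not univ (f · ≤ f x₀) π
    simp only [not_le] at hsplit
    linarith

lemma sq_sum_sum_mul_abs_sq_sub_sq_le (hw : ∀ x y, 0 ≤ π x * M x y) (g : V → ℝ) :
    (∑ x, ∑ y, π x * M x y * |g x ^ 2 - g y ^ 2|) ^ 2 ≤
      (∑ x, ∑ y, π x * M x y * (g x - g y) ^ 2) * ∑ x, ∑ y, π x * M x y * (g x + g y) ^ 2 := by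
  have := sum_sq_le_sum_mul_sum_of_sq_le_mul (univ : Finset (V × V))
    (r := fun p => π p.1 * M p.1 p.2 * |g p.1 ^ 2 - g p.2 ^ 2|)
    (f := fun p => π p.1 * M p.1 p.2 * (g p.1 - g p.2) ^ 2)
    (g := fun p => π p.1 * M p.1 p.2 * (g p.1 + g p.2) ^ 2)
    (fun p _ => mul_nonneg (hw _ _) (sq_nonneg _)) (fun p _ => mul_nonneg (hw _ _) (sq_nonneg _))
    fun p _ => le_of_eq (by rw [mul_pow, sq_abs]; ring)
  simpa only [Fintype.sum_prod_type] using this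

lemma weightedInner_self_le_of_dotProduct_eq_zero (hπ1 : ∑ x, π x = 1) {f : V → ℝ}
    (hf : π ⬝ᵥ f = 0) (m : ℝ) :
    weightedInner π f f ≤ weightedInner π (fun x => max (f x - m) 0) (fun x => max (f x - m) 0) +
      weightedInner π (fun x => max (-(f x - m)) 0) (fun x => max (-(f x - m)) 0) := by
  have hpt x : π x * (max (f x - m) 0 * max (f x - m) 0) +
      π x * (max (-(f x - m)) 0 * max (-(f x - m)) 0) =
        π x * (f x * f x) - 2 * m * (π x * f x) + m ^ 2 * π x := by
    linear_combination π x * sq_max_add_sq_max_neg (f x - m)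
  have hmean : ∑ x, π x * f x = 0 := hf
  simp only [weightedInner]
  rw [← sum_add_distrib, sum_congr rfl fun x _ => hpt x, sum_add_distrib, sum_sub_distrib,
    ← mul_sum, ← mul_sum, hmean, hπ1]
  linarith [sq_nonneg m]

variable [DecidableEq V]

def ConductanceGE (π : V → ℝ) (M : Matrix V V ℝ) (φ : ℝ) : Prop :=
  ∀ A : Finset V, ∑ x ∈ A, π x ≤ 1 / 2 → φ * ∑ x ∈ A, π x ≤ edgeFlow π M A

lemma dirichletForm_eq (hM : M ∈ rowStochastic ℝ V) (hMπ : M ∈ stationaryMatrices π)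
    (f : V → ℝ) : dirichletForm π M f = weightedInner π f f - weightedInner π (M *ᵥ f) f := by
  have hcross : ∑ x, ∑ y, π x * M x y * (f x * f y) = weightedInner π (M *ᵥ f) f := by
    simp only [weightedInner, mulVec, dotProduct, sum_mul, mul_sum]
    exact sum_congr rfl fun x _ => sum_congr rfl fun y _ => by ring
  have hexpand : ∑ x, ∑ y, π x * M x y * (f x - f y) ^ 2 =
      ∑ x, ∑ y, π x * M x y * f x ^ 2 + ∑ x, ∑ y, π x * M x y * f y ^ 2 -
        2 * ∑ x, ∑ y, π x * M x y * (f x * f y) := by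
    simp only [mul_sum, ← sum_add_distrib, ← sum_sub_distrib]
    exact sum_congr rfl fun x _ => sum_congr rfl fun y _ => by ring
  rw [dirichletForm, hexpand, sum_sum_mul_left hM, sum_sum_mul_right hMπ, hcross]
  simp only [weightedInner, sq]
  ring

lemma sum_sum_mul_add_sq_le (hπ0 : ∀ x, 0 ≤ π x) (hM : M ∈ rowStochastic ℝ V)
    (hMπ : M ∈ stationaryMatrices π) (g : V → ℝ) :
    ∑ x, ∑ y, π x * M x y * (g x + g y) ^ 2 ≤ 4 * weightedInner π g g :=
  calc ∑ x, ∑ y, π x * M x y * (g x + g y) ^ 2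
      ≤ ∑ x, ∑ y, (2 * (π x * M x y * g x ^ 2) + 2 * (π x * M x y * g y ^ 2)) :=
        sum_le_sum fun x _ => sum_le_sum fun y _ => by
          have hw := mul_nonneg (hπ0 x) (nonneg_of_mem_rowStochastic hM (i := x) (j := y))
          nlinarith [mul_nonneg hw (sq_nonneg (g x - g y))]
    _ = 4 * weightedInner π g g := by
        simp only [sum_add_distrib, ← mul_sum, sum_sum_mul_left hM, sum_sum_mul_right hMπ]
        simp only [weightedInner, sq]
        ring

lemma sum_sum_mul_abs_sub_ite (A : Finset V) {c : ℝ} (hc : 0 ≤ c) :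
    ∑ x, ∑ y, π x * M x y * |(if x ∈ A then c else 0) - (if y ∈ A then c else 0)| =
      c * (edgeFlow π M A + edgeFlow π M Aᶜ) := by
  have hin : ∀ x ∈ A, ∑ y, π x * M x y * |(if x ∈ A then c else 0) - (if y ∈ A then c else 0)|
      = c * ∑ y ∈ Aᶜ, π x * M x y := fun x hx => by
    rw [← sum_add_sum_compl A, sum_eq_zero fun y hy => by
      rw [if_pos hx, if_pos hy, sub_self, abs_zero, mul_zero], zero_add, mul_sum]
    exact sum_congr rfl fun y hy => by
      rw [if_pos hx, if_neg (mem_compl.1 hy), sub_zero, abs_of_nonneg hc, mul_comm]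
  have hout : ∀ x ∈ Aᶜ, ∑ y, π x * M x y * |(if x ∈ A then c else 0) - (if y ∈ A then c else 0)|
      = c * ∑ y ∈ A, π x * M x y := fun x hx => by
    rw [← sum_add_sum_compl A, sum_eq_zero (s := Aᶜ) fun y hy => by
      rw [if_neg (mem_compl.1 hx), if_neg (mem_compl.1 hy), sub_self, abs_zero, mul_zero],
      add_zero, mul_sum]
    exact sum_congr rfl fun y hy => by
      rw [if_neg (mem_compl.1 hx), if_pos hy, zero_sub, abs_neg, abs_of_nonneg hc, mul_comm]
  rw [← sum_add_sum_compl A, sum_congr rfl hin, sum_congr rfl hout, ← mul_sum, ← mul_sum,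
    ← mul_add]
  simp only [edgeFlow, compl_compl]

/-- The co-area inequality. Cutting `h` at its least positive value `v`, attained on its
support `A`, removes `v π(A)` from the left and `2 v · edgeFlow A ≥ 2 φ v π(A)` from the right. -/
theorem ConductanceGE.two_mul_sum_le_sum_sum_abs_sub (hφ : ConductanceGE π M φ)
    (hπ0 : ∀ x, 0 ≤ π x) (hrev : IsReversible π M) {h : V → ℝ} (hh : ∀ x, 0 ≤ h x)
    (hsupp : ∑ x ∈ univ.filter (0 < h ·), π x ≤ 1 / 2) :
    2 * φ * ∑ x, π x * h x ≤ ∑ x, ∑ y, π x * M x y * |h x - h y| := by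
  induction hN : #(univ.filter (0 < h ·)) using Nat.strong_induction_on generalizing h with
  | _ N ih =>
  set A := univ.filter (0 < h ·)
  rcases A.eq_empty_or_nonempty with hA | hA
  · have h0 x : h x = 0 := (hh x).antisymm' <| not_lt.1 fun hx =>
      (eq_empty_iff_forall_notMem.1 hA) x (mem_filter.2 ⟨mem_univ x, hx⟩)
    simp [h0]
  obtain ⟨x₀, hx₀, hmin⟩ := A.exists_min_image h hA
  set v := h x₀
  have hv : 0 < v := (mem_filter.1 hx₀).2
  set h' : V → ℝ := fun x => max (h x - v) 0
  have hlevel x : min (h x) v = if x ∈ A then v else 0 := by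
    by_cases hx : x ∈ A
    · rw [if_pos hx, min_eq_right (hmin x hx)]
    · have : h x = 0 := (hh x).antisymm' (not_lt.1 fun hpos => hx (mem_filter.2 ⟨mem_univ x, hpos⟩))
      rw [if_neg hx, this, min_eq_left hv.le]
  have hsplit x : h x = h' x + min (h x) v := (max_sub_zero_add_min (h x) v).symm
  have habs x y : |h x - h y| = |h' x - h' y| + |min (h x) v - min (h y) v| :=
    abs_sub_eq_abs_max_sub_sub_add_abs_min_sub (h x) (h y) v
  have hA' : univ.filter (0 < h' ·) ⊆ A.erase x₀ := fun x hx => by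
    have hx : v < h x := by simpa [h'] using (mem_filter.1 hx).2
    exact mem_erase.2 ⟨fun e => by simp [e, v] at hx, mem_filter.2 ⟨mem_univ x, hv.trans hx⟩⟩
  have hIH := ih _ ((card_le_card hA').trans_lt (hN ▸ card_erase_lt_of_mem hx₀))
    (fun x => le_max_right _ _)
    ((sum_le_sum_of_subset_of_nonneg (hA'.trans (erase_subset _ _)) fun x _ _ => hπ0 x).trans
      hsupp) rfl
  have hmass : ∑ x, π x * h x = ∑ x, π x * h' x + v * ∑ x ∈ A, π x :=
    calc ∑ x, π x * h x = ∑ x, (π x * h' x + if x ∈ A then π x * v else 0) :=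
          sum_congr rfl fun x _ => by rw [hsplit x, hlevel, mul_add, mul_ite, mul_zero]
      _ = ∑ x, π x * h' x + v * ∑ x ∈ A, π x := by
          rw [sum_add_distrib, sum_ite_mem, univ_inter, ← sum_mul, mul_comm]
  have hvar : ∑ x, ∑ y, π x * M x y * |h x - h y| =
      ∑ x, ∑ y, π x * M x y * |h' x - h' y| + v * (edgeFlow π M A + edgeFlow π M Aᶜ) := by
    simp_rw [habs, hlevel, mul_add, sum_add_distrib, sum_sum_mul_abs_sub_ite A hv.le]
    ring
  rw [hmass, hvar, hrev.edgeFlow_compl, mul_add]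
  linarith [mul_le_mul_of_nonneg_left (hφ A hsupp) hv.le]

/-- Co-area applied to `g²`, then Cauchy–Schwarz on `|g x² - g y²| = |g x - g y| (g x + g y)`. -/
lemma ConductanceGE.sq_div_two_mul_le_dirichletForm (hφ : ConductanceGE π M φ) (hφ0 : 0 ≤ φ)
    (hπ0 : ∀ x, 0 ≤ π x) (hM : M ∈ rowStochastic ℝ V) (hrev : IsReversible π M) {g : V → ℝ}
    (hg : ∀ x, 0 ≤ g x) (hsupp : ∑ x ∈ univ.filter (0 < g ·), π x ≤ 1 / 2) :
    φ ^ 2 / 2 * weightedInner π g g ≤ dirichletForm π M g := by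
  have hM0 x y : 0 ≤ M x y := nonneg_of_mem_rowStochastic hM
  have hMπ := hrev.mem_stationaryMatrices hM
  have hw x y : 0 ≤ π x * M x y := mul_nonneg (hπ0 x) (hM0 x y)
  set N := weightedInner π g g
  set E := ∑ x, ∑ y, π x * M x y * (g x - g y) ^ 2
  set P := ∑ x, ∑ y, π x * M x y * |g x ^ 2 - g y ^ 2|
  have hco : 2 * φ * N ≤ P := by
    have hsupp' : univ.filter (0 < g · ^ 2) = univ.filter (0 < g ·) :=
      filter_congr fun x _ => by rw [sq, mul_self_pos, (hg x).lt_iff_ne', ne_comm]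
    have := hφ.two_mul_sum_le_sum_sum_abs_sub hπ0 hrev (h := (g · ^ 2))
      (fun x => sq_nonneg _) (hsupp' ▸ hsupp)
    simpa only [N, P, weightedInner, sq] using this
  have hcs := sq_sum_sum_mul_abs_sq_sub_sq_le hw g
  have hsum : ∑ x, ∑ y, π x * M x y * (g x + g y) ^ 2 ≤ 4 * N :=
    sum_sum_mul_add_sq_le hπ0 hM hMπ g
  have hN0 : 0 ≤ N := weightedInner_self_nonneg hπ0 g
  have hE0 : 0 ≤ E := sum_nonneg fun x _ => sum_nonneg fun y _ =>
    mul_nonneg (hw x y) (sq_nonneg _)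
  have hmain : φ ^ 2 * N * (4 * N) ≤ E * (4 * N) :=
    calc φ ^ 2 * N * (4 * N) = (2 * φ * N) ^ 2 := by ring
      _ ≤ P ^ 2 := pow_le_pow_left₀ (by positivity) hco 2
      _ ≤ E * (4 * N) := hcs.trans (mul_le_mul_of_nonneg_left hsum hE0)
  rcases hN0.eq_or_lt with hN | hN
  · rw [← hN, mul_zero]
    exact dirichletForm_nonneg hπ0 hM0 g
  · have := le_of_mul_le_mul_right hmain (by positivity)
    rw [dirichletForm]
    linarith

/-- Cheeger's inequality: split a mean-zero `f` at a median `m` into `(f - m)⁺` and `(f - m)⁻`,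
each supported on a set of mass at most `1/2`. -/
theorem ConductanceGE.spectralGapGE [Nonempty V] (hφ : ConductanceGE π M φ) (hφ0 : 0 ≤ φ)
    (hπ0 : ∀ x, 0 ≤ π x) (hπ1 : ∑ x, π x = 1) (hM : M ∈ rowStochastic ℝ V)
    (hrev : IsReversible π M) : SpectralGapGE π M (φ ^ 2 / 2) := by
  intro f hf
  have hM0 x y : 0 ≤ M x y := nonneg_of_mem_rowStochastic hM
  obtain ⟨m, hlow, hhigh⟩ := exists_median hπ0 hπ1 f
  set u : V → ℝ := fun x => max (f x - m) 0
  set w : V → ℝ := fun x => max (-(f x - m)) 0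
  have hu := hφ.sq_div_two_mul_le_dirichletForm hφ0 hπ0 hM hrev (g := u)
    (fun x => le_max_right _ _) <| by
      convert hhigh using 2
      ext x
      simp [u]
  have hw := hφ.sq_div_two_mul_le_dirichletForm hφ0 hπ0 hM hrev (g := w)
    (fun x => le_max_right _ _) <| by
      convert hlow using 2
      ext x
      simp [w]
  have hE : dirichletForm π M u + dirichletForm π M w ≤ dirichletForm π M f := by
    simp only [dirichletForm, ← mul_add, ← sum_add_distrib]
    gcongr with x _ y _
    · exact mul_nonneg (hπ0 x) (hM0 x y)
    have := sq_max_sub_max_add_sq_max_neg_sub_le (f x - m) (f y - m)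
    simpa [u, w] using this
  have hN := weightedInner_self_le_of_dotProduct_eq_zero hπ1 hf m
  rw [dirichletForm_eq hM (hrev.mem_stationaryMatrices hM) f] at hE
  linarith [mul_le_mul_of_nonneg_left hN (by positivity : 0 ≤ φ ^ 2 / 2)]

end Cheeger

section CondResample

variable {K : Type*} {κ : V → K}

noncomputable def condResample (π : V → ℝ) (κ : V → K) : Matrix V V ℝ := fun x y =>
  if κ y = κ x then π y / ∑ z ∈ univ.filter (κ · = κ x), π z else 0

lemma sum_filter_eq_apply_pos (hπ : ∀ x, 0 < π x) (x : V) : 0 < ∑ z ∈ univ.filter (κ · = κ x), π z :=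
  sum_pos (fun z _ => hπ z) ⟨x, mem_filter.2 ⟨mem_univ x, rfl⟩⟩

lemma sum_filter_eq_of_eq {x y : V} (h : κ y = κ x) :
    ∑ z ∈ univ.filter (κ · = κ y), π z = ∑ z ∈ univ.filter (κ · = κ x), π z := by
  rw [h]

lemma condResample_apply_of_eq {x y : V} (h : κ y = κ x) :
    condResample π κ x y = π y / ∑ z ∈ univ.filter (κ · = κ x), π z :=
  if_pos h

lemma condResample_apply_of_ne {x y : V} (h : κ y ≠ κ x) : condResample π κ x y = 0 :=
  if_neg h

lemma condResample_pos (hπ : ∀ x, 0 < π x) {x y : V} (h : κ y = κ x) :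
    0 < condResample π κ x y := by
  rw [condResample_apply_of_eq h]
  exact div_pos (hπ y) (sum_filter_eq_apply_pos hπ x)

lemma condResample_nonneg (hπ : ∀ x, 0 < π x) (x y : V) : 0 ≤ condResample π κ x y := by
  by_cases h : κ y = κ x
  · exact (condResample_pos hπ h).le
  · rw [condResample_apply_of_ne h]

lemma sum_condResample_mul (x : V) (F : V → ℝ) :
    ∑ y, condResample π κ x y * F y =
      ∑ y ∈ univ.filter (κ · = κ x), π y / (∑ z ∈ univ.filter (κ · = κ x), π z) * F y := by
  rw [← sum_filter_add_sum_filter_not univ (κ · = κ x),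
    sum_eq_zero (s := univ.filter fun y => ¬κ y = κ x) fun y hy => by
      rw [condResample_apply_of_ne (mem_filter.1 hy).2, zero_mul], add_zero]
  exact sum_congr rfl fun y hy => by rw [condResample_apply_of_eq (mem_filter.1 hy).2]

lemma isReversible_condResample : IsReversible π (condResample π κ) := by
  intro x y
  by_cases h : κ y = κ x
  · rw [condResample_apply_of_eq h, condResample_apply_of_eq h.symm, sum_filter_eq_of_eq h]
    ring
  · rw [condResample_apply_of_ne h, condResample_apply_of_ne (Ne.symm h), mul_zero, mul_zero]

lemma condResample_mul_self (hπ : ∀ x, 0 < π x) :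
    condResample π κ * condResample π κ = condResample π κ := by
  ext x y
  rw [mul_apply, sum_condResample_mul]
  by_cases h : κ y = κ x
  · rw [sum_congr rfl fun z hz => by
      rw [condResample_apply_of_eq (h.trans (mem_filter.1 hz).2.symm),
        sum_filter_eq_of_eq (mem_filter.1 hz).2], ← sum_mul, ← sum_div,
      div_self (sum_filter_eq_apply_pos hπ x).ne', one_mul, condResample_apply_of_eq h]
  · rw [condResample_apply_of_ne h]
    exact sum_eq_zero fun z hz => by
      rw [condResample_apply_of_ne fun h' => h (h'.trans (mem_filter.1 hz).2), mul_zero]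

variable [DecidableEq V]

lemma condResample_mem_rowStochastic (hπ : ∀ x, 0 < π x) :
    condResample π κ ∈ rowStochastic ℝ V := by
  refine mem_rowStochastic_iff_sum.2 ⟨condResample_nonneg hπ, fun x => ?_⟩
  have := sum_condResample_mul (π := π) (κ := κ) x 1
  simp only [Pi.one_apply, mul_one] at this
  rw [this, ← sum_div, div_self (sum_filter_eq_apply_pos hπ x).ne']

end CondResample

end MarkovChain

open MarkovChain

section Gibbs

variable {n : ℕ} {X : Fin n → Type u} [∀ i, Fintype (X i)] {π : (∀ i, X i) → ℝ}

lemma gibbsUpdate_eq_condResample (π : (∀ i, X i) → ℝ) (i : Fin n) :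
    gibbsUpdate π i = condResample π fun x (j : {j // j ≠ i}) => x j := by
  ext x y
  simp only [gibbsUpdate, condResample, funext_iff, Subtype.forall]

lemma gibbsUpdate_mem_rowStochastic (hπ : ∀ x, 0 < π x) (i : Fin n) :
    gibbsUpdate π i ∈ rowStochastic ℝ (∀ i, X i) :=
  gibbsUpdate_eq_condResample π i ▸ condResample_mem_rowStochastic hπ

lemma isReversible_gibbsUpdate (i : Fin n) : IsReversible π (gibbsUpdate π i) :=
  gibbsUpdate_eq_condResample π i ▸ isReversible_condResample

lemma gibbsUpdate_mem_stationaryMatrices (hπ : ∀ x, 0 < π x) (i : Fin n) :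
    gibbsUpdate π i ∈ stationaryMatrices π :=
  (isReversible_gibbsUpdate i).mem_stationaryMatrices (gibbsUpdate_mem_rowStochastic hπ i)

lemma gibbsUpdate_mul_self (hπ : ∀ x, 0 < π x) (i : Fin n) :
    gibbsUpdate π i * gibbsUpdate π i = gibbsUpdate π i :=
  gibbsUpdate_eq_condResample π i ▸ condResample_mul_self hπ

lemma gibbsUpdate_pos (hπ : ∀ x, 0 < π x) {i : Fin n} {x y : ∀ i, X i}
    (h : ∀ j, j ≠ i → y j = x j) : 0 < gibbsUpdate π i x y := by
  rw [gibbsUpdate_eq_condResample]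
  exact condResample_pos hπ (funext fun j => h j j.2)

lemma isReversible_glauberMatrix : IsReversible π (glauberMatrix π) := by
  intro x y
  simp only [glauberMatrix, Matrix.smul_apply, Matrix.sum_apply, smul_eq_mul, mul_sum]
  exact sum_congr rfl fun i _ => by
    linear_combination (n : ℝ)⁻¹ * isReversible_gibbsUpdate (π := π) i x y

lemma glauberMatrix_mem_rowStochastic (hπ : ∀ x, 0 < π x) (hn : n ≠ 0) :
    glauberMatrix π ∈ rowStochastic ℝ (∀ i, X i) := by
  rw [glauberMatrix, smul_sum]
  exact convex_rowStochastic.sum_mem (fun _ _ => by positivity) (by simp [hn])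
    fun i _ => gibbsUpdate_mem_rowStochastic hπ i

lemma weightedInner_glauberMatrix_mulVec_self_nonneg (hπ : ∀ x, 0 < π x) (f : (∀ i, X i) → ℝ) :
    0 ≤ weightedInner π (glauberMatrix π *ᵥ f) f := by
  have : weightedInner π (glauberMatrix π *ᵥ f) f =
      (n : ℝ)⁻¹ * ∑ i, weightedInner π (gibbsUpdate π i *ᵥ f) f := by
    simp only [glauberMatrix, weightedInner, smul_mulVec, sum_mulVec, Pi.smul_apply,
      Finset.sum_apply, smul_eq_mul, mul_sum, sum_mul]
    rw [sum_comm]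
    exact sum_congr rfl fun i _ => sum_congr rfl fun x _ => by ring
  rw [this]
  exact mul_nonneg (by positivity) <| sum_nonneg fun i _ =>
    (isReversible_gibbsUpdate i).weightedInner_mulVec_self_nonneg_of_mul_self
      (fun x => (hπ x).le) (gibbsUpdate_mul_self hπ i) f

lemma edgeFlow_glauberMatrix (A : Finset (∀ i, X i)) :
    edgeFlow π (glauberMatrix π) A = (n : ℝ)⁻¹ * ∑ i, edgeFlow π (gibbsUpdate π i) A := by
  rw [glauberMatrix, edgeFlow_smul, edgeFlow_sum]

lemma scanMatrix_eq (π : (∀ i, X i) → ℝ) (σ : Equiv.Perm (Fin n)) :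
    scanMatrix π σ = ((List.ofFn σ).reverse.map (gibbsUpdate π)).prod := by
  rw [scanMatrix, List.map_reverse, List.map_ofFn]
  rfl

lemma list_prod_gibbsUpdate_mem (hπ : ∀ x, 0 < π x) (l : List (Fin n)) :
    (l.map (gibbsUpdate π)).prod ∈ rowStochastic ℝ (∀ i, X i) ⊓ stationaryMatrices π := by
  refine Submonoid.list_prod_mem _ fun M hM => ?_
  obtain ⟨i, -, rfl⟩ := List.mem_map.1 hM
  exact ⟨gibbsUpdate_mem_rowStochastic hπ i, gibbsUpdate_mem_stationaryMatrices hπ i⟩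

lemma list_prod_gibbsUpdate_pos (hπ : ∀ x, 0 < π x) :
    ∀ (l : List (Fin n)) {x y : ∀ i, X i}, (∀ j, j ∉ l → y j = x j) →
      0 < (l.map (gibbsUpdate π)).prod x y
  | [], x, y, h => by
    rw [show y = x from funext fun j => h j List.not_mem_nil]
    simp
  | i :: l, x, y, h => by
    rw [List.map_cons, List.prod_cons, mul_apply]
    set z := Function.update x i (y i)
    have hz : 0 < gibbsUpdate π i x z * (l.map (gibbsUpdate π)).prod z y :=
      mul_pos (gibbsUpdate_pos hπ fun j hj => Function.update_of_ne hj _ _)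
        (list_prod_gibbsUpdate_pos hπ l fun j hj => by
          by_cases hji : j = i
          · subst hji
            simp [z]
          · rw [show z j = x j from Function.update_of_ne hji _ _]
            exact h j (by simp [hji, hj]))
    refine hz.trans_le (single_le_sum (f := fun w => gibbsUpdate π i x w *
      (l.map (gibbsUpdate π)).prod w y) (fun w _ => mul_nonneg ?_ ?_) (mem_univ z))
    · exact nonneg_of_mem_rowStochastic (gibbsUpdate_mem_rowStochastic hπ i)
    · exact nonneg_of_mem_rowStochastic (list_prod_gibbsUpdate_mem hπ l).1

lemma scanMatrix_pos (hπ : ∀ x, 0 < π x) (σ : Equiv.Perm (Fin n)) (x y : ∀ i, X i) :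
    0 < scanMatrix π σ x y := by
  rw [scanMatrix_eq]
  exact list_prod_gibbsUpdate_pos hπ _ fun j hj =>
    absurd (List.mem_reverse.2 (List.mem_ofFn.2 ⟨σ.symm j, σ.apply_symm_apply j⟩)) hj

lemma scanMatrix_mem (hπ : ∀ x, 0 < π x) (σ : Equiv.Perm (Fin n)) :
    scanMatrix π σ ∈ rowStochastic ℝ (∀ i, X i) ⊓ stationaryMatrices π :=
  scanMatrix_eq π σ ▸ list_prod_gibbsUpdate_mem hπ _

lemma edgeFlow_scanMatrix_le (hπ : ∀ x, 0 < π x) (σ : Equiv.Perm (Fin n))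
    (A : Finset (∀ i, X i)) :
    edgeFlow π (scanMatrix π σ) A ≤ ∑ i, edgeFlow π (gibbsUpdate π i) A := by
  rw [scanMatrix_eq]
  refine (edgeFlow_list_prod_le (fun x => (hπ x).le) A fun M hM => ?_).trans_eq ?_
  · obtain ⟨i, -, rfl⟩ := List.mem_map.1 hM
    exact ⟨gibbsUpdate_mem_rowStochastic hπ i, gibbsUpdate_mem_stationaryMatrices hπ i⟩
  · rw [List.map_map, List.map_reverse, List.sum_reverse, List.map_ofFn, List.sum_ofFn]
    exact Equiv.sum_comp σ fun i => edgeFlow π (gibbsUpdate π i) A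

theorem conductanceGE_glauberMatrix (hπ : ∀ x, 0 < π x) (hπ1 : ∑ x, π x = 1) (hn : n ≠ 0)
    (σ : Equiv.Perm (Fin n)) {T : ℕ} (hT0 : 0 < T)
    (hT : ∀ x, 1 / 2 * ∑ y, |(scanMatrix π σ ^ T) x y - π y| ≤ 1 / 10) :
    ConductanceGE π (glauberMatrix π) (3 / (10 * (n : ℝ) * T)) := by
  intro A hA
  have hπ0 x := (hπ x).le
  have hscan := scanMatrix_mem hπ σ
  have hcompl : 3 / 10 ≤ ∑ y ∈ Aᶜ, π y - 2 * (1 / 10) := by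
    linarith [sum_add_sum_compl A π]
  have hlow := (mul_le_mul_of_nonneg_right hcompl (sum_nonneg fun x _ => hπ0 x)).trans
    (mul_le_edgeFlow_of_tv_le hπ0 hT A)
  have hup := (edgeFlow_pow_le hπ0 hscan.1 hscan.2 A T).trans
    (mul_le_mul_of_nonneg_left (edgeFlow_scanMatrix_le hπ σ A) (Nat.cast_nonneg T))
  have hsum : ∑ i, edgeFlow π (gibbsUpdate π i) A = n * edgeFlow π (glauberMatrix π) A := by
    rw [edgeFlow_glauberMatrix, mul_inv_cancel_left₀ (Nat.cast_ne_zero.2 hn)]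
  rw [hsum] at hup
  rw [div_mul_eq_mul_div, div_le_iff₀ (by positivity)]
  linarith

lemma tv_scanMatrix_pow_mixTime_le [∀ i, Nonempty (X i)] (hπ : ∀ x, 0 < π x)
    (hπ1 : ∑ x, π x = 1) (σ : Equiv.Perm (Fin n)) (x : ∀ i, X i) :
    1 / 2 * ∑ y, |(scanMatrix π σ ^ mixTime (scanMatrix π σ) π (1 / 10)) x y - π y| ≤ 1 / 10 :=
  have hscan := scanMatrix_mem hπ σ
  tv_pow_mixTime_le (exists_forall_tv_pow_le (fun x => (hπ x).le) hπ1 hscan.1 hscan.2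
    (scanMatrix_pos hπ σ) (by norm_num)) x

theorem mixTime_glauberMatrix_le [∀ i, Nonempty (X i)] (hπ : ∀ x, 0 < π x)
    (hπ1 : ∑ x, π x = 1) (hn : n ≠ 0) {ε : ℝ} (hε : 0 < ε) (hε1 : ε ≤ 1)
    (σ : Equiv.Perm (Fin n)) :
    (mixTime (glauberMatrix π) π ε : ℝ) ≤
      50 * n ^ 2 * (mixTime (scanMatrix π σ) π (1 / 10) : ℝ) ^ 2 *
        Real.log (1 / (ε * piMin π)) := by
  have hπ0 x := (hπ x).le
  set L := Real.log (1 / (ε * piMin π))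
  rcases subsingleton_or_nontrivial (∀ i, X i) with hV | hV
  · rw [mixTime_eq_zero hπ0 hπ1 hε.le, Nat.cast_zero]
    have := log_one_div_mul_piMin_nonneg hπ hπ1 hε hε1
    positivity
  set T := mixTime (scanMatrix π σ) π (1 / 10)
  have hT := tv_scanMatrix_pow_mixTime_le hπ hπ1 σ
  have hT0 : 0 < T := pos_of_forall_tv_pow_le hπ0 hπ1 (by norm_num) hT
  have hnT : 1 ≤ (n : ℝ) * T := one_le_mul_of_one_le_of_one_le
    (Nat.one_le_cast.2 (Nat.pos_of_ne_zero hn)) (Nat.one_le_cast.2 hT0)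
  have hL : 1 / 2 ≤ L := by
    linarith [log_two_le_log_one_div_mul_piMin hπ hπ1 hε hε1, Real.log_two_gt_d9]
  set φ : ℝ := 3 / (10 * (n : ℝ) * T)
  have hφ0 : 0 < φ := by positivity
  have hφ1 : φ ≤ 1 := by
    rw [div_le_one (by positivity)]
    linarith
  have hgap := (conductanceGE_glauberMatrix hπ hπ1 hn σ hT0 hT).spectralGapGE hφ0.le hπ0 hπ1
    (glauberMatrix_mem_rowStochastic hπ hn) isReversible_glauberMatrix
  have hmix := hgap.mixTime_le (by positivity) (by nlinarith) hπ hπ1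
    (glauberMatrix_mem_rowStochastic hπ hn) isReversible_glauberMatrix
    (weightedInner_glauberMatrix_mulVec_self_nonneg hπ) hε
  have hsq : 1 / 2 ≤ ((n : ℝ) * T) ^ 2 * L := by nlinarith
  calc (mixTime (glauberMatrix π) π ε : ℝ) ≤ ⌈2 / (φ ^ 2 / 2) * L⌉₊ := Nat.cast_le.2 hmix
    _ ≤ 2 / (φ ^ 2 / 2) * L + 1 := (Nat.ceil_lt_add_one (by positivity)).le
    _ = 400 / 9 * ((n : ℝ) * T) ^ 2 * L + 1 := by
        simp only [φ]
        field_simp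
        ring
    _ ≤ 50 * n ^ 2 * (T : ℝ) ^ 2 * L := by nlinarith

end Gibbs

lemma sq_mul_sq_le_pow_mul_log {n T T' k : ℕ} (hn : 1 ≤ n) (hT : T ≤ T') (hk : 2 ≤ k) :
    (n : ℝ) ^ 2 * T ^ 2 ≤ n ^ k * T' ^ 4 * Real.log (2 + n * T') := by
  have hlog0 : 0 ≤ Real.log (2 + n * T') :=
    Real.log_nonneg (by linarith [mul_nonneg (Nat.cast_nonneg (α := ℝ) n) (Nat.cast_nonneg T')])
  rcases Nat.eq_zero_or_pos T with rfl | hT0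
  · rw [Nat.cast_zero, zero_pow two_ne_zero, mul_zero]
    positivity
  have hn' : (1 : ℝ) ≤ n := Nat.one_le_cast.2 hn
  have hT' : (1 : ℝ) ≤ T := Nat.one_le_cast.2 hT0
  have hTT : (T : ℝ) ≤ T' := Nat.cast_le.2 hT
  have hlog : 1 ≤ Real.log (2 + n * T') := by
    rw [Real.le_log_iff_exp_le (by positivity)]
    nlinarith [Real.exp_one_lt_d9]
  calc (n : ℝ) ^ 2 * T ^ 2 ≤ n ^ k * T' ^ 4 :=
        mul_le_mul (pow_le_pow_right₀ hn' hk)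
          ((pow_le_pow_left₀ (by positivity) hTT 2).trans
            (pow_le_pow_right₀ (hT'.trans hTT) (by norm_num))) (by positivity) (by positivity)
    _ ≤ n ^ k * T' ^ 4 * Real.log (2 + n * T') := le_mul_of_one_le_right (by positivity) hlog

/-- There are universal constants `C > 0`, `K > 0` such that for every fully supported
distribution `π` on a finite product space: (i) for every scan order `σ`, with
`T = t^{SS(σ)}_mix(1/10)`, one has
`t^{GD}_mix(ε) ≤ C n⁶ T⁴ (log(2 + nT))^K log(1/(ε π_min))`; and (ii) with
`T* = max_σ t^{SS(σ)}_mix(1/10)`, one has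
`t^{GD}_mix(ε) ≤ C n⁴ (T*)⁴ (log(2 + nT*))^K log(1/(ε π_min))`. -/
theorem glauber_mixing_of_scan_mixing :
    ∃ C K : ℝ, 0 < C ∧ 0 < K ∧
      ∀ (n : ℕ), 1 ≤ n →
      ∀ (X : Fin n → Type u) [∀ i, Fintype (X i)] [∀ i, Nonempty (X i)]
        (π : (∀ i, X i) → ℝ), (∀ x, 0 < π x) → (∑ x, π x = 1) →
      ∀ (ε : ℝ), 0 < ε → ε ≤ 1 →
      ((∀ (σ : Equiv.Perm (Fin n)),
          (mixTime (glauberMatrix π) π ε : ℝ) ≤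
            C * (n : ℝ) ^ 6 * (mixTime (scanMatrix π σ) π (1 / 10) : ℝ) ^ 4 *
              Real.log (2 + (n : ℝ) * (mixTime (scanMatrix π σ) π (1 / 10) : ℝ)) ^ K *
              Real.log (1 / (ε * piMin π))) ∧
        ((mixTime (glauberMatrix π) π ε : ℝ) ≤
            C * (n : ℝ) ^ 4 *
              ((Finset.univ.sup (fun σ : Equiv.Perm (Fin n) =>
                mixTime (scanMatrix π σ) π (1 / 10)) : ℕ) : ℝ) ^ 4 *
              Real.log (2 + (n : ℝ) *
                ((Finset.univ.sup (fun σ : Equiv.Perm (Fin n) =>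
                  mixTime (scanMatrix π σ) π (1 / 10)) : ℕ) : ℝ)) ^ K *
              Real.log (1 / (ε * piMin π)))) := by
  refine ⟨50, 1, by norm_num, one_pos, fun n hn X _ _ π hπ hπ1 ε hε hε1 => ?_⟩
  have hL := log_one_div_mul_piMin_nonneg hπ hπ1 hε hε1
  have hmix σ := mixTime_glauberMatrix_le hπ hπ1 (Nat.one_le_iff_ne_zero.1 hn) hε hε1 σ
  simp only [Real.rpow_one]
  refine ⟨fun σ => (hmix σ).trans ?_, (hmix 1).trans ?_⟩
  · have h := sq_mul_sq_le_pow_mul_log (k := 6) hn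
      (le_refl (mixTime (scanMatrix π σ) π (1 / 10))) (by norm_num)
    exact mul_le_mul_of_nonneg_right (by linarith) hL
  · have hT : mixTime (scanMatrix π 1) π (1 / 10) ≤
        Finset.univ.sup fun σ => mixTime (scanMatrix π σ) π (1 / 10) :=
      Finset.le_sup (f := fun σ => mixTime (scanMatrix π σ) π (1 / 10)) (Finset.mem_univ 1)
    have h := sq_mul_sq_le_pow_mul_log (k := 4) hn hT (by norm_num)
    exact mul_le_mul_of_nonneg_right (by linarith) hL
end

section
/- Let n ≥ 1 be an integer and δ ∈ [0, 1]. For k = 1, …, n define the vector a_k = √(2(1−δ)) · (cos(kπ/n), sin(kπ/n)) ∈ ℝ² and the 2×2 real matrix A_k = a_k a_kᵀ. Then the matrix product satisfies A_n A_{n−1} ⋯ A_1 = (2(1−δ) cos(π/n))^{n−1} · a_n a_1ᵀ. -/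
open Real Matrix

lemma vecMulVec_mul_vecMulVec {m : ℕ} (a b c d : Fin m → ℝ) :
    Matrix.vecMulVec a b * Matrix.vecMulVec c d = (b ⬝ᵥ c) • Matrix.vecMulVec a d := by
  ext i j
  simp [Matrix.mul_apply, Matrix.vecMulVec_apply, dotProduct, Finset.sum_mul,
    Finset.mul_sum]
  congr 1; ext k; ring

lemma aux (c : ℝ) (a : ℕ → Fin 2 → ℝ)
    (h : ∀ k, 1 ≤ k → a (k + 1) ⬝ᵥ a k = c) :
    ∀ m, 1 ≤ m →
      ((List.ofFn fun j : Fin m =>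
        Matrix.vecMulVec (a ((j : ℕ) + 1)) (a ((j : ℕ) + 1))).reverse).prod =
      c ^ (m - 1) • Matrix.vecMulVec (a m) (a 1) := by
  intro m hm
  induction m, hm using Nat.le_induction with
  | base => simp [List.ofFn_succ]
  | succ m hm ih =>
    rw [List.ofFn_succ', List.concat_eq_append, List.reverse_append]
    simp only [List.reverse_singleton, List.singleton_append, List.prod_cons]
    simp only [Fin.val_last, Fin.coe_castSucc]
    rw [ih]
    rw [Matrix.mul_smul, vecMulVec_mul_vecMulVec, h m hm]
    rw [smul_smul, ← pow_succ, Nat.sub_add_cancel hm, Nat.add_sub_cancel]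

/-- For `n ≥ 1`, `δ ∈ [0,1]`, and `a_k = √(2(1-δ)) (cos(kπ/n), sin(kπ/n))`,
the rank-one matrices `A_k = a_k a_kᵀ` satisfy
`A_n A_{n-1} ⋯ A_1 = (2(1-δ) cos(π/n))^{n-1} a_n a_1ᵀ`. -/
theorem recht_re_product
    (n : ℕ) (hn : 1 ≤ n) (δ : ℝ) (hδ0 : 0 ≤ δ) (hδ1 : δ ≤ 1)
    (a : ℕ → Fin 2 → ℝ)
    (ha : ∀ k, a k = ![Real.sqrt (2 * (1 - δ)) * Real.cos (k * π / n),
                       Real.sqrt (2 * (1 - δ)) * Real.sin (k * π / n)]) :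
    ((List.ofFn fun j : Fin n =>
        Matrix.vecMulVec (a ((j : ℕ) + 1)) (a ((j : ℕ) + 1))).reverse).prod =
      (2 * (1 - δ) * Real.cos (π / n)) ^ (n - 1) • Matrix.vecMulVec (a n) (a 1) := by
  apply aux _ _ _ n hn
  intro k hk
  have hs : Real.sqrt (2 * (1 - δ)) * Real.sqrt (2 * (1 - δ)) = 2 * (1 - δ) := by
    exact Real.mul_self_sqrt (by linarith)
  rw [ha (k+1), ha k]
  simp only [dotProduct, Fin.sum_univ_two, Matrix.cons_val_zero, Matrix.cons_val_one,
    Matrix.head_cons]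
  have : Real.cos (↑(k+1) * π / n) * Real.cos (k * π / n) +
      Real.sin (↑(k+1) * π / n) * Real.sin (k * π / n) = Real.cos (π / n) := by
    rw [← Real.cos_sub]
    congr 1
    push_cast
    field_simp
    ring
  calc Real.sqrt (2 * (1 - δ)) * Real.cos (↑(k+1) * π / n) *
        (Real.sqrt (2 * (1 - δ)) * Real.cos (k * π / n)) +
      Real.sqrt (2 * (1 - δ)) * Real.sin (↑(k+1) * π / n) *
        (Real.sqrt (2 * (1 - δ)) * Real.sin (k * π / n))
      = (Real.sqrt (2 * (1 - δ)) * Real.sqrt (2 * (1 - δ))) *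
        (Real.cos (↑(k+1) * π / n) * Real.cos (k * π / n) +
         Real.sin (↑(k+1) * π / n) * Real.sin (k * π / n)) := by ring
    _ = 2 * (1 - δ) * Real.cos (π / n) := by rw [hs, this]
end

section
/- Let n ≥ 2 be an integer and δ ∈ [0, 1]. For k = 1, …, n define the vector a_k = √(2(1−δ)) · (cos(kπ/n), sin(kπ/n)) ∈ ℝ² and the 2×2 real matrix A_k = a_k a_kᵀ. Then the operator norm of the matrix product satisfies ‖A_n A_{n−1} ⋯ A_1‖ = (2(1−δ))^n (cos(π/n))^{n−1}. -/
/-!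
Each `A_k = a_k a_kᵀ` has rank one, and the product of two rank-one matrices is again one:
`(u uᵀ)(v vᵀ) = (uᵀv) u vᵀ`. Consecutive vectors `a_{k+1}, a_k` have the same length
`√(2(1-δ))` and make the angle `π/n`, so `a_{k+1}ᵀ a_k = 2(1-δ) cos(π/n)` and the product
telescopes to `(2(1-δ) cos(π/n))^{n-1} a_n a_1ᵀ`. The operator norm of `u vᵀ` is `‖u‖ ‖v‖`.
-/

open Real Matrix InnerProductSpace

section RankOne

variable {𝕜 n : Type*} [RCLike 𝕜] [Fintype n] [DecidableEq n]

theorem Matrix.toEuclideanCLM_vecMulVec_star (u v : n → 𝕜) :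
    toEuclideanCLM (𝕜 := 𝕜) (vecMulVec u (star v)) =
      rankOne 𝕜 (WithLp.toLp 2 u) (WithLp.toLp 2 v) := by
  apply ContinuousLinearMap.coe_injective
  rw [coe_toEuclideanCLM_eq_toEuclideanLin, ← symm_toEuclideanLin_rankOne,
    LinearEquiv.apply_symm_apply]

theorem Matrix.norm_toEuclideanCLM_vecMulVec_star (u v : n → 𝕜) :
    ‖toEuclideanCLM (𝕜 := 𝕜) (vecMulVec u (star v))‖ = ‖WithLp.toLp 2 u‖ * ‖WithLp.toLp 2 v‖ := by
  rw [toEuclideanCLM_vecMulVec_star, norm_rankOne]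

end RankOne

theorem Matrix.prod_reverse_ofFn_vecMulVec_self {ι R : Type*} [Fintype ι] [DecidableEq ι]
    [CommSemiring R] (d : ℕ → ι → R) (c : R) (hd : ∀ k, d (k + 2) ⬝ᵥ d (k + 1) = c) (m : ℕ) :
    ((List.ofFn fun j : Fin (m + 1) => vecMulVec (d (j + 1)) (d (j + 1))).reverse).prod =
      c ^ m • vecMulVec (d (m + 1)) (d 1) := by
  induction m with
  | zero => simp
  | succ m ih =>
    rw [List.ofFn_succ']
    simp only [List.concat_eq_append, List.reverse_append, List.prod_append,
      Fin.val_castSucc, ih, Fin.val_last, List.reverse_singleton, List.prod_singleton]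
    rw [mul_smul_comm, vecMulVec_mul_vecMulVec, hd, vecMulVec_smul, smul_smul, pow_succ]

theorem dotProduct_polar (r s θ φ : ℝ) :
    ![r * cos θ, r * sin θ] ⬝ᵥ ![s * cos φ, s * sin φ] = r * s * cos (θ - φ) := by
  simp only [dotProduct, Fin.sum_univ_two, cons_val_zero, cons_val_one, cos_sub]
  ring

theorem norm_toLp_polar (r θ : ℝ) : ‖WithLp.toLp 2 ![r * cos θ, r * sin θ]‖ = |r| := by
  rw [EuclideanSpace.norm_eq, Fin.sum_univ_two, ← sqrt_sq_eq_abs]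
  congr 1
  simp only [cons_val_zero, cons_val_one, norm_mul, mul_pow, norm_eq_abs, sq_abs, ← mul_add,
    cos_sq_add_sin_sq, mul_one]

theorem recht_re_product_norm_general
    (n : ℕ) (hn : 2 ≤ n) (δ : ℝ) (hδ1 : δ ≤ 1)
    (a : ℕ → Fin 2 → ℝ)
    (ha : ∀ k, a k = ![Real.sqrt (2 * (1 - δ)) * Real.cos (k * π / n),
                       Real.sqrt (2 * (1 - δ)) * Real.sin (k * π / n)]) :
    ‖Matrix.toEuclideanCLM (𝕜 := ℝ)
        (((List.ofFn fun j : Fin n =>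
          Matrix.vecMulVec (a ((j : ℕ) + 1)) (a ((j : ℕ) + 1))).reverse).prod)‖ =
      (2 * (1 - δ)) ^ n * Real.cos (π / n) ^ (n - 1) := by
  set r := √(2 * (1 - δ))
  have hr : r * r = 2 * (1 - δ) := mul_self_sqrt (by linarith)
  have hn0 : (0 : ℝ) < n := by positivity
  have hdot (k : ℕ) : a (k + 2) ⬝ᵥ a (k + 1) = r * r * cos (π / n) := by
    rw [ha, ha, dotProduct_polar]
    congr 2
    field_simp
    push_cast
    ring
  have hnorm (k : ℕ) : ‖WithLp.toLp 2 (a k)‖ = r := by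
    rw [ha, norm_toLp_polar, abs_of_nonneg (sqrt_nonneg _)]
  have hcos : 0 ≤ cos (π / n) := by
    apply cos_nonneg_of_neg_pi_div_two_le_of_le
    · linarith [pi_pos, div_nonneg pi_pos.le hn0.le]
    · exact div_le_div_of_nonneg_left pi_pos.le two_pos (by exact_mod_cast hn)
  obtain ⟨m, rfl⟩ : ∃ m, n = m + 1 := ⟨n - 1, by omega⟩
  rw [prod_reverse_ofFn_vecMulVec_self a _ hdot, map_smul, norm_smul, ← star_trivial (a 1),
    norm_toEuclideanCLM_vecMulVec_star, hnorm, hnorm, norm_pow, norm_of_nonneg (by positivity),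
    hr, Nat.add_sub_cancel, mul_pow]
  ring

/-- For `n ≥ 2`, `δ ∈ [0,1]`, and `a_k = √(2(1-δ)) (cos(kπ/n), sin(kπ/n))`, the
rank-one matrices `A_k = a_k a_kᵀ` satisfy
`‖A_n A_{n-1} ⋯ A_1‖ = (2(1-δ))^n (cos(π/n))^{n-1}`, where `‖·‖` is the operator
norm induced by the Euclidean norm on `ℝ²` (realized via `Matrix.toEuclideanCLM`). -/
theorem recht_re_product_norm
    (n : ℕ) (hn : 2 ≤ n) (δ : ℝ) (hδ0 : 0 ≤ δ) (hδ1 : δ ≤ 1)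
    (a : ℕ → Fin 2 → ℝ)
    (ha : ∀ k, a k = ![Real.sqrt (2 * (1 - δ)) * Real.cos (k * π / n),
                       Real.sqrt (2 * (1 - δ)) * Real.sin (k * π / n)]) :
    ‖Matrix.toEuclideanCLM (𝕜 := ℝ)
        (((List.ofFn fun j : Fin n =>
          Matrix.vecMulVec (a ((j : ℕ) + 1)) (a ((j : ℕ) + 1))).reverse).prod)‖ =
      (2 * (1 - δ)) ^ n * Real.cos (π / n) ^ (n - 1) :=
  recht_re_product_norm_general n hn δ hδ1 a ha
end
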